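/- arXiv:2508.03581 — 12 statements merged into one kernel-verified Lean document; each statement's English description precedes it below -/
import Mathlib

section
/- Let u, v : ℝ² → ℂ be smooth functions of (x,t) satisfying the Mikhailov model at every point. Then at every (x,t) ∈ ℝ² one has ∂ₜ((∂ₓu)·(∂ₓv)) = −∂ₓ(u·v). -/
open Complex

/-- Partial derivative with respect to the first (space) variable. -/
noncomputable def pdx (f : ℝ × ℝ → ℂ) (p : ℝ × ℝ) : ℂ := fderiv ℝ f p (1, 0)

/-- Partial derivative with respect to the second (time) variable. -/
noncomputable def pdt (f : ℝ × ℝ → ℂ) (p : ℝ × ℝ) : ℂ := fderiv ℝ f p (0, 1)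

lemma contDiff_fderiv_apply {f : ℝ × ℝ → ℂ} (hf : ContDiff ℝ (⊤ : ℕ∞) f) (w : ℝ × ℝ) :
    ContDiff ℝ (⊤ : ℕ∞) (fun q => fderiv ℝ f q w) :=
  (hf.fderiv_right (by simp)).clm_apply contDiff_const

lemma fderiv_fderiv_apply {f : ℝ × ℝ → ℂ} (hf : ContDiff ℝ (⊤ : ℕ∞) f) (p w v : ℝ × ℝ) :
    fderiv ℝ (fun q => fderiv ℝ f q w) p v = fderiv ℝ (fderiv ℝ f) p v w := by
  have h1 : DifferentiableAt ℝ (fderiv ℝ f) p :=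
    ((hf.fderiv_right (m := 1) (by exact WithTop.coe_le_coe.mpr le_top)).differentiable (by simp)).differentiableAt
  rw [fderiv_clm_apply h1 (differentiableAt_const w)]
  simp

lemma clairaut {f : ℝ × ℝ → ℂ} (hf : ContDiff ℝ (⊤ : ℕ∞) f) (p : ℝ × ℝ) :
    pdt (pdx f) p = pdx (pdt f) p := by
  have hdf : Differentiable ℝ f := hf.differentiable (by simp)
  have h1 : DifferentiableAt ℝ (fderiv ℝ f) p :=
    ((hf.fderiv_right (m := 1) (by exact WithTop.coe_le_coe.mpr le_top)).differentiable (by simp)).differentiableAt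
  have hsymm := second_derivative_symmetric (f' := fderiv ℝ f)
    (fun y => (hdf y).hasFDerivAt) h1.hasFDerivAt
  unfold pdx pdt
  rw [fderiv_fderiv_apply hf, fderiv_fderiv_apply hf, hsymm]

/-- If smooth `u, v` satisfy the Mikhailov model at every point, then
`∂ₜ((∂ₓu)·(∂ₓv)) = −∂ₓ(u·v)` everywhere. -/
theorem mikhailov_conservation (u v : ℝ × ℝ → ℂ)
    (hu : ContDiff ℝ (⊤ : ℕ∞) u) (hv : ContDiff ℝ (⊤ : ℕ∞) v)
    (e1 : ∀ p : ℝ × ℝ, pdx (pdt u) p + u p - 2 * I * u p * v p * pdx u p = 0)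
    (e2 : ∀ p : ℝ × ℝ, pdx (pdt v) p + v p + 2 * I * u p * v p * pdx v p = 0) :
    ∀ p : ℝ × ℝ,
      pdt (fun q => pdx u q * pdx v q) p = - pdx (fun q => u q * v q) p := by
  intro p
  have hux : DifferentiableAt ℝ (pdx u) p :=
    ((contDiff_fderiv_apply hu (1,0)).differentiable (by simp)).differentiableAt
  have hvx : DifferentiableAt ℝ (pdx v) p :=
    ((contDiff_fderiv_apply hv (1,0)).differentiable (by simp)).differentiableAt
  have hup : DifferentiableAt ℝ u p := (hu.differentiable (by simp)).differentiableAt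
  have hvp : DifferentiableAt ℝ v p := (hv.differentiable (by simp)).differentiableAt
  have lhs : pdt (fun q => pdx u q * pdx v q) p
      = pdx u p * pdt (pdx v) p + pdx v p * pdt (pdx u) p := by
    unfold pdt
    rw [fderiv_fun_mul hux hvx]
    simp [pdt, smul_eq_mul]
  have rhs : pdx (fun q => u q * v q) p = u p * pdx v p + v p * pdx u p := by
    unfold pdx
    rw [fderiv_fun_mul hup hvp]
    simp [smul_eq_mul]
  rw [lhs, rhs, clairaut hu, clairaut hv]
  have h1 := e1 p
  have h2 := e2 p
  have h1' : pdx (pdt u) p = -u p + 2 * I * u p * v p * pdx u p := by linear_combination h1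
  have h2' : pdx (pdt v) p = -v p - 2 * I * u p * v p * pdx v p := by linear_combination h2
  rw [h1', h2']
  ring
end

section
/- Let u : ℝ² → ℂ be a smooth function of (x,t) satisfying the nonlocal Fokas–Lenells equation at every point. Then at every (x,t) ∈ ℝ² one has ∂ₜ[(∂ₓu)(x,t)·(∂ₓu)(−x,−t)] = ∂ₓ[u(x,t)·u(−x,−t)], where ∂ₜ and ∂ₓ denote the partial derivatives of the functions (x,t) ↦ (∂ₓu)(x,t)·(∂ₓu)(−x,−t) and (x,t) ↦ u(x,t)·u(−x,−t) respectively. -/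
open Complex

/-- derivative of `q ↦ f (-q)`. -/
lemma fderiv_comp_neg (f : ℝ × ℝ → ℂ) (hf : Differentiable ℝ f) (p v : ℝ × ℝ) :
    fderiv ℝ (fun q => f (-q)) p v = - fderiv ℝ f (-p) v := by
  have h : HasFDerivAt (fun q => f (-q))
      ((fderiv ℝ f (-p)).comp (-(ContinuousLinearMap.id ℝ (ℝ × ℝ)))) p := by
    have := (hf (-p)).hasFDerivAt.comp p ((hasFDerivAt_id p).neg)
    exact this
  rw [h.fderiv]
  simp

/-- derivative of `q ↦ fderiv f q v` applied to `w` equals second derivative. -/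
lemma fderiv_apply_const (f : ℝ × ℝ → ℂ) (hf : ContDiff ℝ (⊤ : ℕ∞) f) (p v w : ℝ × ℝ) :
    fderiv ℝ (fun q => fderiv ℝ f q v) p w = fderiv ℝ (fderiv ℝ f) p w v := by
  have hd : DifferentiableAt ℝ (fderiv ℝ f) p :=
    ((hf.fderiv_right (m := (⊤ : ℕ∞)) ((by simp))).differentiable (by simp)) p
  rw [fderiv_clm_apply hd (differentiableAt_const v)]
  simp

/-- If a smooth `u` satisfies the nonlocal Fokas–Lenells equation
`∂ₓ∂ₜu(x,t) + u(x,t) − 2i·u(x,t)·u(−x,−t)·∂ₓu(x,t) = 0` at every point, then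
`∂ₜ[(∂ₓu)(x,t)·(∂ₓu)(−x,−t)] = ∂ₓ[u(x,t)·u(−x,−t)]` everywhere. -/
theorem nonlocalFL_conservation (u : ℝ × ℝ → ℂ)
    (hu : ContDiff ℝ (⊤ : ℕ∞) u)
    (e : ∀ p : ℝ × ℝ, pdx (pdt u) p + u p - 2 * I * u p * u (-p) * pdx u p = 0) :
    ∀ p : ℝ × ℝ,
      pdt (fun q => pdx u q * pdx u (-q)) p = pdx (fun q => u q * u (-q)) p := by
  intro p
  have hud : Differentiable ℝ u := hu.differentiable (by simp)
  -- smoothness of pdx u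
  have hfd : ContDiff ℝ (⊤ : ℕ∞) (fderiv ℝ u) := hu.fderiv_right (by simp)
  have hpdx : ContDiff ℝ (⊤ : ℕ∞) (pdx u) := hfd.clm_apply contDiff_const
  have hpdxd : Differentiable ℝ (pdx u) := hpdx.differentiable (by simp)
  -- key equation rearranged
  have e' : ∀ p : ℝ × ℝ, pdx (pdt u) p = -u p + 2 * I * u p * u (-p) * pdx u p := by
    intro q
    have := e q
    linear_combination this
  -- symmetry of second derivative: pdt (pdx u) = pdx (pdt u)
  have symm : ∀ q : ℝ × ℝ, pdt (pdx u) q = pdx (pdt u) q := by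
    intro q
    have hs : IsSymmSndFDerivAt ℝ u q :=
      (hu.contDiffAt).isSymmSndFDerivAt (by rw [minSmoothness_of_isRCLikeNormedField]; exact (WithTop.coe_le_coe.mpr le_top : ((2 : ℕ∞) : WithTop ℕ∞) ≤ ((⊤ : ℕ∞) : WithTop ℕ∞)))
    unfold pdx pdt
    rw [fderiv_apply_const u hu, fderiv_apply_const u hu]
    exact hs _ _
  -- LHS computation
  have hLHS : pdt (fun q => pdx u q * pdx u (-q)) p
      = pdt (pdx u) p * pdx u (-p) - pdx u p * pdt (pdx u) (-p) := by
    unfold pdt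
    have hg : DifferentiableAt ℝ (fun q => pdx u (-q)) p :=
      (hpdxd (-p)).comp p differentiableAt_id.neg
    rw [fderiv_fun_mul (hpdxd p) hg]
    simp only [ContinuousLinearMap.add_apply, ContinuousLinearMap.smul_apply,
      smul_eq_mul]
    have hneg : fderiv ℝ (fun q => pdx u q) p (0,1) = fderiv ℝ (pdx u) p (0,1) := rfl
    have h2 : fderiv ℝ (fun q => pdx u (-q)) p (0,1) = - fderiv ℝ (pdx u) (-p) (0,1) :=
      fderiv_comp_neg (pdx u) hpdxd p (0,1)
    rw [h2]
    show pdx u p * (-fderiv ℝ (pdx u) (-p) (0, 1)) + pdx u (-p) * fderiv ℝ (pdx u) p (0, 1) = _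
    ring
  -- RHS computation
  have hRHS : pdx (fun q => u q * u (-q)) p
      = pdx u p * u (-p) - u p * pdx u (-p) := by
    unfold pdx
    have hg : DifferentiableAt ℝ (fun q => u (-q)) p :=
      (hud (-p)).comp p differentiableAt_id.neg
    rw [fderiv_fun_mul (hud p) hg]
    simp only [ContinuousLinearMap.add_apply, ContinuousLinearMap.smul_apply,
      smul_eq_mul]
    have h2 : fderiv ℝ (fun q => u (-q)) p (1,0) = - fderiv ℝ u (-p) (1,0) :=
      fderiv_comp_neg u hud p (1,0)
    rw [h2]
    show u p * (-fderiv ℝ u (-p) (1, 0)) + u (-p) * fderiv ℝ u p (1, 0) = _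
    ring
  rw [hLHS, hRHS, symm p, symm (-p), e' p, e' (-p)]
  simp only [neg_neg]
  ring
end

section
/- Let q1, q2, q3, q4 : ℝ² → ℂ be smooth functions of (x,t). For λ ∈ ℂ with λ ≠ 0, define 2×2 complex matrix-valued functions M(λ) = (i/2)·[[−λ² + q1·q2, 2λ·q1], [2λ·q2, λ² − q1·q2]] and N(λ) = (i/2)·[[−λ⁻² + q3·q4, 2λ⁻¹·q3], [2λ⁻¹·q4, λ⁻² − q3·q4]]. Then the following are equivalent: (i) for every λ ∈ ℂ with λ ≠ 0 and every (x,t) ∈ ℝ², the zero-curvature equation ∂ₜM(λ) − ∂ₓN(λ) + M(λ)·N(λ) − N(λ)·M(λ) = 0 holds; (ii) q1, q2, q3, q4 satisfy the unreduced massive Thirring system at every point. -/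
open Complex Matrix

/-- Entrywise spatial partial derivative of a matrix-valued function. -/
noncomputable def pdxM (F : ℝ × ℝ → Matrix (Fin 2) (Fin 2) ℂ) (p : ℝ × ℝ) :
    Matrix (Fin 2) (Fin 2) ℂ :=
  Matrix.of fun i j => pdx (fun q => F q i j) p

/-- Entrywise temporal partial derivative of a matrix-valued function. -/
noncomputable def pdtM (F : ℝ × ℝ → Matrix (Fin 2) (Fin 2) ℂ) (p : ℝ × ℝ) :
    Matrix (Fin 2) (Fin 2) ℂ :=
  Matrix.of fun i j => pdt (fun q => F q i j) p

/-- The Lax matrix `M(λ)`. -/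
noncomputable def laxM (q1 q2 : ℝ × ℝ → ℂ) (l : ℂ) (p : ℝ × ℝ) :
    Matrix (Fin 2) (Fin 2) ℂ :=
  (I / 2) • !![-l ^ 2 + q1 p * q2 p, 2 * l * q1 p;
               2 * l * q2 p, l ^ 2 - q1 p * q2 p]

/-- The Lax matrix `N(λ)`. -/
noncomputable def laxN (q3 q4 : ℝ × ℝ → ℂ) (l : ℂ) (p : ℝ × ℝ) :
    Matrix (Fin 2) (Fin 2) ℂ :=
  (I / 2) • !![-(l⁻¹) ^ 2 + q3 p * q4 p, 2 * l⁻¹ * q3 p;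
               2 * l⁻¹ * q4 p, (l⁻¹) ^ 2 - q3 p * q4 p]

lemma pd_cmul_add (p v : ℝ × ℝ) (c e : ℂ) (f g : ℝ × ℝ → ℂ)
    (hf : DifferentiableAt ℝ f p) (hg : DifferentiableAt ℝ g p) :
    fderiv ℝ (fun q => c * (f q * g q) + e) p v
      = c * (f p * fderiv ℝ g p v + g p * fderiv ℝ f p v) := by
  rw [fderiv_add_const, fderiv_const_mul (hf.fun_mul hg), fderiv_fun_mul hf hg]
  simp [smul_eq_mul]
  ring

lemma pd_cmul (p v : ℝ × ℝ) (c : ℂ) (f : ℝ × ℝ → ℂ)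
    (hf : DifferentiableAt ℝ f p) :
    fderiv ℝ (fun q => c * f q) p v = c * fderiv ℝ f p v := by
  rw [fderiv_const_mul hf]; simp

set_option maxHeartbeats 4000000 in
lemma zc_key (q1 q2 q3 q4 : ℝ × ℝ → ℂ)
    (hq1 : ContDiff ℝ (⊤ : ℕ∞) q1) (hq2 : ContDiff ℝ (⊤ : ℕ∞) q2)
    (hq3 : ContDiff ℝ (⊤ : ℕ∞) q3) (hq4 : ContDiff ℝ (⊤ : ℕ∞) q4)
    (l : ℂ) (hl : l ≠ 0) (p : ℝ × ℝ) :
    pdtM (laxM q1 q2 l) p - pdxM (laxN q3 q4 l) p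
      + laxM q1 q2 l p * laxN q3 q4 l p - laxN q3 q4 l p * laxM q1 q2 l p
    = !![(q2 p * (I * pdt q1 p + q3 p + q1 p * q3 p * q4 p)
          + q1 p * (I * pdt q2 p - q4 p - q2 p * q3 p * q4 p)
          - q4 p * (I * pdx q3 p + q1 p + q1 p * q2 p * q3 p)
          - q3 p * (I * pdx q4 p - q2 p - q1 p * q2 p * q4 p)) / 2,
         l * (I * pdt q1 p + q3 p + q1 p * q3 p * q4 p)
          - l⁻¹ * (I * pdx q3 p + q1 p + q1 p * q2 p * q3 p);
         l * (I * pdt q2 p - q4 p - q2 p * q3 p * q4 p)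
          - l⁻¹ * (I * pdx q4 p - q2 p - q1 p * q2 p * q4 p),
         -((q2 p * (I * pdt q1 p + q3 p + q1 p * q3 p * q4 p)
          + q1 p * (I * pdt q2 p - q4 p - q2 p * q3 p * q4 p)
          - q4 p * (I * pdx q3 p + q1 p + q1 p * q2 p * q3 p)
          - q3 p * (I * pdx q4 p - q2 p - q1 p * q2 p * q4 p)) / 2)] := by
  have h1 : DifferentiableAt ℝ q1 p := (hq1.differentiable (by simp)) p
  have h2 : DifferentiableAt ℝ q2 p := (hq2.differentiable (by simp)) p
  have h3 : DifferentiableAt ℝ q3 p := (hq3.differentiable (by simp)) p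
  have h4 : DifferentiableAt ℝ q4 p := (hq4.differentiable (by simp)) p
  have dM00 : pdt (fun q => I / 2 * (-l ^ 2 + q1 q * q2 q)) p
      = (I / 2) * (q1 p * pdt q2 p + q2 p * pdt q1 p) := by
    rw [show (fun q : ℝ × ℝ => I / 2 * (-l ^ 2 + q1 q * q2 q))
        = fun q => (I / 2) * (q1 q * q2 q) + (I / 2 * (-l ^ 2)) from
      funext fun q => by ring]
    exact pd_cmul_add p (0, 1) _ _ _ _ h1 h2
  have dM01 : pdt (fun q => I / 2 * (2 * l * q1 q)) p = (I * l) * pdt q1 p := by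
    rw [show (fun q : ℝ × ℝ => I / 2 * (2 * l * q1 q)) = fun q => (I * l) * q1 q from
      funext fun q => by ring]
    exact pd_cmul p (0, 1) _ _ h1
  have dM10 : pdt (fun q => I / 2 * (2 * l * q2 q)) p = (I * l) * pdt q2 p := by
    rw [show (fun q : ℝ × ℝ => I / 2 * (2 * l * q2 q)) = fun q => (I * l) * q2 q from
      funext fun q => by ring]
    exact pd_cmul p (0, 1) _ _ h2
  have dM11 : pdt (fun q => I / 2 * (l ^ 2 - q1 q * q2 q)) p
      = (-(I / 2)) * (q1 p * pdt q2 p + q2 p * pdt q1 p) := by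
    rw [show (fun q : ℝ × ℝ => I / 2 * (l ^ 2 - q1 q * q2 q))
        = fun q => (-(I / 2)) * (q1 q * q2 q) + (I / 2 * l ^ 2) from
      funext fun q => by ring]
    exact pd_cmul_add p (0, 1) _ _ _ _ h1 h2
  have dN00 : pdx (fun q => I / 2 * (-l⁻¹ ^ 2 + q3 q * q4 q)) p
      = (I / 2) * (q3 p * pdx q4 p + q4 p * pdx q3 p) := by
    rw [show (fun q : ℝ × ℝ => I / 2 * (-l⁻¹ ^ 2 + q3 q * q4 q))
        = fun q => (I / 2) * (q3 q * q4 q) + (I / 2 * (-l⁻¹ ^ 2)) from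
      funext fun q => by ring]
    exact pd_cmul_add p (1, 0) _ _ _ _ h3 h4
  have dN01 : pdx (fun q => I / 2 * (2 * l⁻¹ * q3 q)) p = (I * l⁻¹) * pdx q3 p := by
    rw [show (fun q : ℝ × ℝ => I / 2 * (2 * l⁻¹ * q3 q)) = fun q => (I * l⁻¹) * q3 q from
      funext fun q => by ring]
    exact pd_cmul p (1, 0) _ _ h3
  have dN10 : pdx (fun q => I / 2 * (2 * l⁻¹ * q4 q)) p = (I * l⁻¹) * pdx q4 p := by
    rw [show (fun q : ℝ × ℝ => I / 2 * (2 * l⁻¹ * q4 q)) = fun q => (I * l⁻¹) * q4 q from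
      funext fun q => by ring]
    exact pd_cmul p (1, 0) _ _ h4
  have dN11 : pdx (fun q => I / 2 * (l⁻¹ ^ 2 - q3 q * q4 q)) p
      = (-(I / 2)) * (q3 p * pdx q4 p + q4 p * pdx q3 p) := by
    rw [show (fun q : ℝ × ℝ => I / 2 * (l⁻¹ ^ 2 - q3 q * q4 q))
        = fun q => (-(I / 2)) * (q3 q * q4 q) + (I / 2 * l⁻¹ ^ 2) from
      funext fun q => by ring]
    exact pd_cmul_add p (1, 0) _ _ _ _ h3 h4
  have hll : l * l⁻¹ = 1 := mul_inv_cancel₀ hl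
  ext i j
  fin_cases i <;> fin_cases j <;>
    [skip; skip; skip; skip] <;>
    simp only [pdtM, pdxM, Matrix.of_apply, Matrix.sub_apply, Matrix.add_apply,
      Matrix.mul_apply, Fin.sum_univ_two, Fin.isValue, Fin.zero_eta, Fin.mk_one,
      laxM, laxN, Matrix.smul_apply, smul_eq_mul, Matrix.cons_val',
      Matrix.cons_val_zero, Matrix.cons_val_one, Matrix.head_cons, Matrix.head_fin_const,
      Matrix.empty_val', Matrix.cons_val_fin_one]
  · rw [dM00, dN00]
    linear_combination ((-1:ℂ) * (l) * (l⁻¹) * (q2 p) * (q3 p) + (l) * (l⁻¹) * (q1 p) * (q4 p)) * Complex.I_sq + ((q2 p) * (q3 p) + (-1:ℂ) * (q1 p) * (q4 p)) * hll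
  · rw [dM01, dN01]
    linear_combination ((l⁻¹) * (q1 p) * (q2 p) * (q3 p) + (-1:ℂ) * (l) * (q1 p) * (q3 p) * (q4 p) + (l) * (l⁻¹) * (l⁻¹) * (q1 p) + (-1:ℂ) * (l) * (l) * (l⁻¹) * (q3 p)) * Complex.I_sq + ((-1:ℂ) * (l⁻¹) * (q1 p) + (l) * (q3 p)) * hll
  · rw [dM10, dN10]
    linear_combination ((-1:ℂ) * (l⁻¹) * (q1 p) * (q2 p) * (q4 p) + (l) * (q2 p) * (q3 p) * (q4 p) + (-1:ℂ) * (l) * (l⁻¹) * (l⁻¹) * (q2 p) + (l) * (l) * (l⁻¹) * (q4 p)) * Complex.I_sq + ((l⁻¹) * (q2 p) + (-1:ℂ) * (l) * (q4 p)) * hll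
  · rw [dM11, dN11]
    linear_combination ((l) * (l⁻¹) * (q2 p) * (q3 p) + (-1:ℂ) * (l) * (l⁻¹) * (q1 p) * (q4 p)) * Complex.I_sq + ((-1:ℂ) * (q2 p) * (q3 p) + (q1 p) * (q4 p)) * hll

/-- The zero-curvature equation `∂ₜM(λ) − ∂ₓN(λ) + [M(λ), N(λ)] = 0` for all `λ ≠ 0`
holds iff `q1, q2, q3, q4` satisfy the unreduced massive Thirring system. -/
theorem zeroCurvature_iff_unreducedMTM (q1 q2 q3 q4 : ℝ × ℝ → ℂ)
    (hq1 : ContDiff ℝ (⊤ : ℕ∞) q1) (hq2 : ContDiff ℝ (⊤ : ℕ∞) q2)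
    (hq3 : ContDiff ℝ (⊤ : ℕ∞) q3) (hq4 : ContDiff ℝ (⊤ : ℕ∞) q4) :
    (∀ l : ℂ, l ≠ 0 → ∀ p : ℝ × ℝ,
        pdtM (laxM q1 q2 l) p - pdxM (laxN q3 q4 l) p
          + laxM q1 q2 l p * laxN q3 q4 l p - laxN q3 q4 l p * laxM q1 q2 l p = 0)
      ↔
    (∀ p : ℝ × ℝ,
        (I * pdt q1 p + q3 p + q1 p * q3 p * q4 p = 0) ∧
        (I * pdt q2 p - q4 p - q2 p * q3 p * q4 p = 0) ∧
        (I * pdx q3 p + q1 p + q1 p * q2 p * q3 p = 0) ∧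
        (I * pdx q4 p - q2 p - q1 p * q2 p * q4 p = 0)) := by
  constructor
  · intro h p
    have K1 := h 1 one_ne_zero p
    have K2 := h 2 two_ne_zero p
    rw [zc_key q1 q2 q3 q4 hq1 hq2 hq3 hq4 1 one_ne_zero p] at K1
    rw [zc_key q1 q2 q3 q4 hq1 hq2 hq3 hq4 2 two_ne_zero p] at K2
    have a1 := congrFun (congrFun K1 0) 1
    have a2 := congrFun (congrFun K2 0) 1
    have b1 := congrFun (congrFun K1 1) 0
    have b2 := congrFun (congrFun K2 1) 0
    simp only [Matrix.of_apply, Matrix.cons_val', Matrix.cons_val_zero, Matrix.cons_val_one,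
      Matrix.head_cons, Matrix.head_fin_const, Matrix.empty_val',
      Matrix.cons_val_fin_one, Matrix.zero_apply] at a1 a2 b1 b2
    have e1 : I * pdt q1 p + q3 p + q1 p * q3 p * q4 p = 0 := by
      linear_combination ((2:ℂ)/3) * a2 - ((1:ℂ)/3) * a1
    have e3 : I * pdx q3 p + q1 p + q1 p * q2 p * q3 p = 0 := by
      linear_combination ((2:ℂ)/3) * a2 - ((4:ℂ)/3) * a1
    have e2 : I * pdt q2 p - q4 p - q2 p * q3 p * q4 p = 0 := by
      linear_combination ((2:ℂ)/3) * b2 - ((1:ℂ)/3) * b1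
    have e4 : I * pdx q4 p - q2 p - q1 p * q2 p * q4 p = 0 := by
      linear_combination ((2:ℂ)/3) * b2 - ((4:ℂ)/3) * b1
    exact ⟨e1, e2, e3, e4⟩
  · intro h l hl p
    rw [zc_key q1 q2 q3 q4 hq1 hq2 hq3 hq4 l hl p]
    obtain ⟨e1, e2, e3, e4⟩ := h p
    rw [e1, e2, e3, e4]
    ext i j
    fin_cases i <;> fin_cases j <;> simp
end

section
/- (Proposition 2.1) Let u, v : ℝ² → ℂ be smooth functions of (x,t) satisfying the Mikhailov model at every point, and let β : ℝ² → ℂ be a smooth function with ∂ₓβ = (∂ₓu)·(∂ₓv) and ∂ₜβ = −u·v at every point. Then the functions q1 = (∂ₓu)·e^{iβ}, q2 = (∂ₓv)·e^{−iβ}, q3 = i·u·e^{iβ}, q4 = −i·v·e^{−iβ} satisfy the unreduced massive Thirring system at every point. -/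
open Complex

lemma fderiv_mul_apply' {f g : ℝ × ℝ → ℂ} {p : ℝ × ℝ}
    (hf : DifferentiableAt ℝ f p) (hg : DifferentiableAt ℝ g p) (w : ℝ × ℝ) :
    fderiv ℝ (fun q => f q * g q) p w
      = fderiv ℝ f p w * g p + f p * fderiv ℝ g p w := by
  rw [fderiv_fun_mul hf hg]
  simp [smul_eq_mul]
  ring

lemma fderiv_cexp_mul {β : ℝ × ℝ → ℂ} {p : ℝ × ℝ}
    (hβ : DifferentiableAt ℝ β p) (c : ℂ) (w : ℝ × ℝ) :
    fderiv ℝ (fun q => Complex.exp (c * β q)) p w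
      = Complex.exp (c * β p) * (c * fderiv ℝ β p w) := by
  have h := ((hβ.hasFDerivAt.const_mul c).cexp).fderiv
  rw [h]
  simp [smul_eq_mul]

lemma fderiv_eval {f : ℝ × ℝ → ℂ} (hf : ContDiff ℝ (⊤ : ℕ∞) f) (p v : ℝ × ℝ) :
    fderiv ℝ (fun q => fderiv ℝ f q v) p
      = (ContinuousLinearMap.apply ℝ ℂ v).comp (fderiv ℝ (fderiv ℝ f) p) := by
  have hd : DifferentiableAt ℝ (fderiv ℝ f) p :=
    ((hf.fderiv_right (WithTop.coe_le_coe.mpr le_top)).differentiable one_ne_zero) p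
  exact (((ContinuousLinearMap.apply ℝ ℂ v).hasFDerivAt).comp p hd.hasFDerivAt).fderiv

lemma snd_deriv_swap {f : ℝ × ℝ → ℂ} (hf : ContDiff ℝ (⊤ : ℕ∞) f) (p v w : ℝ × ℝ) :
    fderiv ℝ (fun q => fderiv ℝ f q v) p w = fderiv ℝ (fun q => fderiv ℝ f q w) p v := by
  rw [fderiv_eval hf p v, fderiv_eval hf p w]
  simpa using (hf.contDiffAt.isSymmSndFDerivAt (by rw [minSmoothness_of_isRCLikeNormedField]; exact WithTop.coe_le_coe.mpr (le_top : (2 : ℕ∞) ≤ ⊤))).eq w v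

lemma pd_diff {f : ℝ × ℝ → ℂ} (hf : ContDiff ℝ (⊤ : ℕ∞) f) (v p : ℝ × ℝ) :
    DifferentiableAt ℝ (fun q => fderiv ℝ f q v) p := by
  have hd : DifferentiableAt ℝ (fderiv ℝ f) p :=
    ((hf.fderiv_right (WithTop.coe_le_coe.mpr le_top)).differentiable one_ne_zero) p
  exact (((ContinuousLinearMap.apply ℝ ℂ v).hasFDerivAt).comp p hd.hasFDerivAt).differentiableAt

/-- Proposition 2.1: solutions of the Mikhailov model give, via the gauge factor
`e^{iβ}` with `∂ₓβ = (∂ₓu)(∂ₓv)`, `∂ₜβ = −uv`, solutions of the unreduced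
massive Thirring system. -/
theorem mikhailov_to_unreducedMTM (u v β : ℝ × ℝ → ℂ)
    (hu : ContDiff ℝ (⊤ : ℕ∞) u) (hv : ContDiff ℝ (⊤ : ℕ∞) v) (hβ : ContDiff ℝ (⊤ : ℕ∞) β)
    (e1 : ∀ p : ℝ × ℝ, pdx (pdt u) p + u p - 2 * I * u p * v p * pdx u p = 0)
    (e2 : ∀ p : ℝ × ℝ, pdx (pdt v) p + v p + 2 * I * u p * v p * pdx v p = 0)
    (hβx : ∀ p : ℝ × ℝ, pdx β p = pdx u p * pdx v p)
    (hβt : ∀ p : ℝ × ℝ, pdt β p = -(u p * v p))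
    (q1 q2 q3 q4 : ℝ × ℝ → ℂ)
    (hq1 : q1 = fun p => pdx u p * exp (I * β p))
    (hq2 : q2 = fun p => pdx v p * exp (-(I * β p)))
    (hq3 : q3 = fun p => I * u p * exp (I * β p))
    (hq4 : q4 = fun p => -(I * v p * exp (-(I * β p)))) :
    ∀ p : ℝ × ℝ,
      (I * pdt q1 p + q3 p + q1 p * q3 p * q4 p = 0) ∧
      (I * pdt q2 p - q4 p - q2 p * q3 p * q4 p = 0) ∧
      (I * pdx q3 p + q1 p + q1 p * q2 p * q3 p = 0) ∧
      (I * pdx q4 p - q2 p - q1 p * q2 p * q4 p = 0) := by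
  intro p
  have hβ' : DifferentiableAt ℝ β p := (hβ.differentiable (by simp)) p
  have hu' : DifferentiableAt ℝ u p := (hu.differentiable (by simp)) p
  have hv' : DifferentiableAt ℝ v p := (hv.differentiable (by simp)) p
  have hE1 : DifferentiableAt ℝ (fun q => exp (I * β q)) p :=
    (hβ'.const_mul I).cexp
  have hE2 : DifferentiableAt ℝ (fun q => exp ((-I) * β q)) p :=
    (hβ'.const_mul (-I)).cexp
  have hEE : exp (I * β p) * exp (-(I * β p)) = 1 := by
    rw [← Complex.exp_add]; simp
  have hneg : ∀ q : ℝ × ℝ, -(I * β q) = (-I) * β q := fun q => by ring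
  -- derivative of exp(I β) and exp(-I β)
  have dE1 : ∀ w, fderiv ℝ (fun q => exp (I * β q)) p w
      = exp (I * β p) * (I * fderiv ℝ β p w) := fun w => fderiv_cexp_mul hβ' I w
  have dE2 : ∀ w, fderiv ℝ (fun q => exp ((-I) * β q)) p w
      = exp ((-I) * β p) * ((-I) * fderiv ℝ β p w) := fun w => fderiv_cexp_mul hβ' (-I) w
  have hE2' : exp ((-I) * β p) = exp (-(I * β p)) := by rw [hneg]
  -- second derivative swaps
  have hsu : pdt (pdx u) p = pdx (pdt u) p := snd_deriv_swap hu p (1,0) (0,1)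
  have hsv : pdt (pdx v) p = pdx (pdt v) p := snd_deriv_swap hv p (1,0) (0,1)
  -- compute pdt q1
  have h1 : pdt q1 p = pdx (pdt u) p * exp (I * β p)
      + pdx u p * (exp (I * β p) * (I * (-(u p * v p)))) := by
    rw [hq1]
    show fderiv ℝ (fun q => fderiv ℝ u q (1,0) * exp (I * β q)) p (0,1) = _
    rw [fderiv_mul_apply' (pd_diff hu (1,0) p) hE1 (0,1), dE1]
    rw [show fderiv ℝ (fun q => fderiv ℝ u q (1,0)) p (0,1) = pdt (pdx u) p from rfl, hsu,
      show fderiv ℝ β p (0,1) = pdt β p from rfl, hβt]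
    rfl
  have h2 : pdt q2 p = pdx (pdt v) p * exp (-(I * β p))
      + pdx v p * (exp (-(I * β p)) * ((-I) * (-(u p * v p)))) := by
    rw [hq2]
    show fderiv ℝ (fun q => fderiv ℝ v q (1,0) * exp (-(I * β q))) p (0,1) = _
    simp only [hneg]
    rw [fderiv_mul_apply' (pd_diff hv (1,0) p) hE2 (0,1), dE2, hE2']
    rw [show fderiv ℝ (fun q => fderiv ℝ v q (1,0)) p (0,1) = pdt (pdx v) p from rfl, hsv,
      show fderiv ℝ β p (0,1) = pdt β p from rfl, hβt]
    rfl
  have h3 : pdx q3 p = I * pdx u p * exp (I * β p)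
      + I * u p * (exp (I * β p) * (I * (pdx u p * pdx v p))) := by
    rw [hq3]
    show fderiv ℝ (fun q => (I * u q) * exp (I * β q)) p (1,0) = _
    rw [fderiv_mul_apply' (hu'.const_mul I) hE1 (1,0), dE1]
    rw [show fderiv ℝ (fun q => I * u q) p (1,0) = I * fderiv ℝ u p (1,0) from by
      rw [fderiv_const_mul hu' I]; simp]
    rw [show fderiv ℝ β p (1,0) = pdx β p from rfl, hβx]
    rfl
  have h4 : pdx q4 p = -(I * pdx v p * exp (-(I * β p))
      + I * v p * (exp (-(I * β p)) * ((-I) * (pdx u p * pdx v p)))) := by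
    rw [hq4]
    show fderiv ℝ (fun q => -((I * v q) * exp (-(I * β q)))) p (1,0) = _
    simp only [hneg]
    rw [fderiv_fun_neg, ContinuousLinearMap.neg_apply,
      fderiv_mul_apply' (hv'.const_mul I) hE2 (1,0), dE2, hE2']
    rw [show fderiv ℝ (fun q => I * v q) p (1,0) = I * fderiv ℝ v p (1,0) from by
      rw [fderiv_const_mul hv' I]; simp]
    rw [show fderiv ℝ β p (1,0) = pdx β p from rfl, hβx]
    rfl
  refine ⟨?_, ?_, ?_, ?_⟩
  · rw [h1, hq1, hq3, hq4]
    linear_combination (I * exp (I * β p)) * e1 p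
      - (I * I * pdx u p * u p * v p * exp (I * β p)) * hEE
  · rw [h2, hq2, hq3, hq4]
    linear_combination (I * exp (-(I * β p))) * e2 p
      + (I * I * u p * v p * pdx v p * exp (-(I * β p))) * hEE
  · rw [h3, hq1, hq2, hq3]
    linear_combination (pdx u p * exp (I * β p)
        + I * u p * pdx u p * pdx v p * exp (I * β p)) * Complex.I_mul_I
      + (I * u p * pdx u p * pdx v p * exp (I * β p)) * hEE
  · rw [h4, hq1, hq2, hq4]
    linear_combination (-(pdx v p * exp (-(I * β p)))
        + I * pdx u p * pdx v p * v p * exp (-(I * β p))) * Complex.I_mul_I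
      + (I * pdx u p * pdx v p * v p * exp (-(I * β p))) * hEE
end

section
/- Let u : ℝ² → ℂ be a smooth function of (x,t) satisfying the Fokas–Lenells equation at every point, and let β : ℝ² → ℝ be a smooth real-valued function with ∂ₓβ = |∂ₓu|² and ∂ₜβ = −|u|² at every point. Then the functions q1 = (∂ₓu)·e^{iβ} and q3 = i·u·e^{iβ} satisfy the (local) massive Thirring model with δ = 1 at every point. -/
open Complex

/-- Spatial partial derivative of a real-valued function. -/
noncomputable def pdxR (f : ℝ × ℝ → ℝ) (p : ℝ × ℝ) : ℝ := fderiv ℝ f p (1, 0)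

/-- Temporal partial derivative of a real-valued function. -/
noncomputable def pdtR (f : ℝ × ℝ → ℝ) (p : ℝ × ℝ) : ℝ := fderiv ℝ f p (0, 1)

lemma pd_mul {f g : ℝ × ℝ → ℂ} {p : ℝ × ℝ} (hf : DifferentiableAt ℝ f p)
    (hg : DifferentiableAt ℝ g p) (v : ℝ × ℝ) :
    fderiv ℝ (fun q => f q * g q) p v = fderiv ℝ f p v * g p + f p * fderiv ℝ g p v := by
  rw [fderiv_fun_mul hf hg]
  simp only [ContinuousLinearMap.add_apply, ContinuousLinearMap.smul_apply, smul_eq_mul]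
  ring

lemma hasFDerivAt_expI {β : ℝ × ℝ → ℝ} {p : ℝ × ℝ} (hβ : DifferentiableAt ℝ β p) :
    HasFDerivAt (fun q => Complex.exp (I * (β q : ℂ)))
      (((ContinuousLinearMap.smulRight (1 : ℂ →L[ℂ] ℂ)
          (Complex.exp (I * (β p : ℂ)))).restrictScalars ℝ).comp
        (I • (Complex.ofRealCLM.comp (fderiv ℝ β p)))) p := by
  have h1 : HasFDerivAt (fun q => I * (β q : ℂ))
      (I • (Complex.ofRealCLM.comp (fderiv ℝ β p))) p :=
    (Complex.ofRealCLM.hasFDerivAt.comp p hβ.hasFDerivAt).const_mul I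
  have h2 := (Complex.hasDerivAt_exp (I * (β p : ℂ))).hasFDerivAt
  exact (h2.restrictScalars ℝ).comp p h1

lemma fderiv_expI {β : ℝ × ℝ → ℝ} {p : ℝ × ℝ} (hβ : DifferentiableAt ℝ β p) (v : ℝ × ℝ) :
    fderiv ℝ (fun q => Complex.exp (I * (β q : ℂ))) p v
      = I * (fderiv ℝ β p v : ℂ) * Complex.exp (I * (β p : ℂ)) := by
  rw [(hasFDerivAt_expI hβ).fderiv]
  simp only [ContinuousLinearMap.coe_comp', Function.comp_apply,
    ContinuousLinearMap.coe_restrictScalars', ContinuousLinearMap.smul_apply,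
    ContinuousLinearMap.smulRight_apply, ContinuousLinearMap.one_apply,
    Complex.ofRealCLM_apply, smul_eq_mul]

lemma contDiff_pdx {u : ℝ × ℝ → ℂ} (hu : ContDiff ℝ (⊤ : ℕ∞) u) : ContDiff ℝ (⊤ : ℕ∞) (pdx u) :=
  (hu.fderiv_right (by simp)).clm_apply contDiff_const

lemma pd_comm {u : ℝ × ℝ → ℂ} (hu : ContDiff ℝ (⊤ : ℕ∞) u) (p : ℝ × ℝ) :
    fderiv ℝ (pdx u) p (0, 1) = pdx (pdt u) p := by
  have hderiv : ∀ y, HasFDerivAt u (fderiv ℝ u y) y :=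
    fun y => (hu.differentiable (by simp) y).hasFDerivAt
  have hD : HasFDerivAt (fderiv ℝ u) (fderiv ℝ (fderiv ℝ u) p) p :=
    ((hu.fderiv_right (m := (⊤ : ℕ∞)) (by simp)).differentiable (by simp) p).hasFDerivAt
  have hsymm := second_derivative_symmetric hderiv hD (1, 0) (0, 1)
  have e1 : fderiv ℝ (pdx u) p (0, 1) = fderiv ℝ (fderiv ℝ u) p (0, 1) (1, 0) := by
    have : HasFDerivAt (fun q => fderiv ℝ u q (1, 0))
        ((ContinuousLinearMap.apply ℝ ℂ ((1 : ℝ), (0 : ℝ))).comp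
          (fderiv ℝ (fderiv ℝ u) p)) p :=
      (ContinuousLinearMap.apply ℝ ℂ ((1 : ℝ), (0 : ℝ))).hasFDerivAt.comp p hD
    show fderiv ℝ (fun q => fderiv ℝ u q (1, 0)) p (0, 1) = _
    simpa [pdx] using congrArg (fun L => L ((0 : ℝ), (1 : ℝ))) this.fderiv
  have e2 : pdx (pdt u) p = fderiv ℝ (fderiv ℝ u) p (1, 0) (0, 1) := by
    have : HasFDerivAt (fun q => fderiv ℝ u q (0, 1))
        ((ContinuousLinearMap.apply ℝ ℂ ((0 : ℝ), (1 : ℝ))).comp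
          (fderiv ℝ (fderiv ℝ u) p)) p :=
      (ContinuousLinearMap.apply ℝ ℂ ((0 : ℝ), (1 : ℝ))).hasFDerivAt.comp p hD
    show fderiv ℝ (fun q => fderiv ℝ u q (0, 1)) p (1, 0) = _
    simpa [pdx, pdt] using congrArg (fun L => L ((1 : ℝ), (0 : ℝ))) this.fderiv
  rw [e1, e2, ← hsymm]

/-- A solution `u` of the Fokas–Lenells equation, together with a real gauge `β`
with `∂ₓβ = |∂ₓu|²`, `∂ₜβ = −|u|²`, produces a solution `(q1, q3)` of the local
massive Thirring model with `δ = 1`. -/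
theorem FL_to_MTM (u : ℝ × ℝ → ℂ) (β : ℝ × ℝ → ℝ)
    (hu : ContDiff ℝ (⊤ : ℕ∞) u) (hβ : ContDiff ℝ (⊤ : ℕ∞) β)
    (eFL : ∀ p : ℝ × ℝ,
      pdx (pdt u) p + u p - 2 * I * (‖u p‖ ^ 2 : ℝ) * pdx u p = 0)
    (hβx : ∀ p : ℝ × ℝ, pdxR β p = ‖pdx u p‖ ^ 2)
    (hβt : ∀ p : ℝ × ℝ, pdtR β p = -(‖u p‖ ^ 2))
    (q1 q3 : ℝ × ℝ → ℂ)
    (hq1 : q1 = fun p => pdx u p * exp (I * (β p : ℂ)))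
    (hq3 : q3 = fun p => I * u p * exp (I * (β p : ℂ))) :
    ∀ p : ℝ × ℝ,
      (I * pdt q1 p + q3 p + q1 p * (‖q3 p‖ ^ 2 : ℝ) = 0) ∧
      (I * pdx q3 p + q1 p + q3 p * (‖q1 p‖ ^ 2 : ℝ) = 0) := by
  subst hq1 hq3
  intro p
  have hβd : DifferentiableAt ℝ β p := hβ.differentiable (by simp) p
  have hud : DifferentiableAt ℝ u p := hu.differentiable (by simp) p
  have hpux : DifferentiableAt ℝ (pdx u) p := (contDiff_pdx hu).differentiable (by simp) p
  have hE : DifferentiableAt ℝ (fun q => Complex.exp (I * (β q : ℂ))) p :=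
    (hasFDerivAt_expI hβd).differentiableAt
  have habsE : ‖Complex.exp (I * (β p : ℂ))‖ = 1 := by
    simp [Complex.norm_exp]
  have hβtp : fderiv ℝ β p (0, 1) = -(‖u p‖ ^ 2) := hβt p
  have hβxp : fderiv ℝ β p (1, 0) = ‖pdx u p‖ ^ 2 := hβx p
  constructor
  · have h1 : pdt (fun q => pdx u q * Complex.exp (I * (β q : ℂ))) p
        = fderiv ℝ (pdx u) p (0, 1) * Complex.exp (I * (β p : ℂ))
          + pdx u p * (I * (fderiv ℝ β p (0, 1) : ℂ) * Complex.exp (I * (β p : ℂ))) := by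
      rw [pdt, pd_mul hpux hE, fderiv_expI hβd]
    rw [h1, pd_comm hu, hβtp]
    have habs : ‖I * u p * Complex.exp (I * (β p : ℂ))‖ ^ 2
        = ‖u p‖ ^ 2 := by
      simp [map_mul, habsE]
    rw [habs]
    have h := eFL p
    push_cast at h ⊢
    linear_combination (I * Complex.exp (I * (β p : ℂ))) * h
      + (Complex.exp (I * (β p : ℂ)) * pdx u p * (‖u p‖ : ℂ) ^ 2) * Complex.I_sq
  · have hIu : DifferentiableAt ℝ (fun q => I * u q) p := hud.const_mul I
    have h2 : pdx (fun q => I * u q * Complex.exp (I * (β q : ℂ))) p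
        = I * pdx u p * Complex.exp (I * (β p : ℂ))
          + I * u p * (I * (fderiv ℝ β p (1, 0) : ℂ) * Complex.exp (I * (β p : ℂ))) := by
      rw [pdx, pd_mul hIu hE, fderiv_expI hβd]
      have : fderiv ℝ (fun q => I * u q) p (1, 0) = I * pdx u p := by
        rw [fderiv_const_mul hud]; simp [pdx]
      rw [this]
    rw [h2, hβxp]
    have habs : ‖pdx u p * Complex.exp (I * (β p : ℂ))‖ ^ 2
        = ‖pdx u p‖ ^ 2 := by
      simp [map_mul, habsE]
    rw [habs]
    push_cast
    linear_combination (I * Complex.exp (I * (β p : ℂ)) * u p * (‖pdx u p‖ : ℂ) ^ 2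
      + pdx u p * Complex.exp (I * (β p : ℂ))) * Complex.I_sq
end

section
/- (Proposition 2.2, transformation from the nonlocal Fokas–Lenells equation to the nonlocal massive Thirring model) Let u : ℝ² → ℂ be a smooth function of (x,t) satisfying the nonlocal Fokas–Lenells equation at every point, and let β : ℝ² → ℂ be a smooth function such that at every (x,t): ∂ₓβ(x,t) = (∂ₓu)(x,t)·(∂ₓu)(−x,−t), ∂ₜβ(x,t) = u(x,t)·u(−x,−t), and β(−x,−t) = −β(x,t). Then the functions q1(x,t) = (∂ₓu)(x,t)·e^{−iβ(x,t)} and q3(x,t) = i·u(x,t)·e^{−iβ(x,t)} satisfy the nonlocal massive Thirring model with δ = −1 at every point, i.e. i·∂ₜq1(x,t) + q3(x,t) − q1(x,t)·q3(x,t)·q3(−x,−t) = 0 and i·∂ₓq3(x,t) + q1(x,t) − q3(x,t)·q1(x,t)·q1(−x,−t) = 0 for all (x,t) ∈ ℝ². -/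
open Complex

/-- Mixed partial derivatives commute for smooth functions. -/
lemma mixed_symm (u : ℝ × ℝ → ℂ) (hu : ContDiff ℝ (⊤ : ℕ∞) u) (p : ℝ × ℝ) :
    fderiv ℝ (pdx u) p (0, 1) = pdx (pdt u) p := by
  have hDu : ContDiff ℝ (⊤ : ℕ∞) (fderiv ℝ u) := hu.fderiv_right (by simp)
  have hf' : ∀ y, HasFDerivAt u (fderiv ℝ u y) y :=
    fun y => (hu.differentiable (by simp) y).hasFDerivAt
  have hf'' : HasFDerivAt (fderiv ℝ u) (fderiv ℝ (fderiv ℝ u) p) p :=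
    (hDu.differentiable (by simp) p).hasFDerivAt
  set f'' := fderiv ℝ (fderiv ℝ u) p with hf''def
  have hsym := second_derivative_symmetric hf' hf'' (0, 1) (1, 0)
  have h1 : HasFDerivAt (pdx u)
      ((ContinuousLinearMap.apply ℝ ℂ ((1 : ℝ), (0 : ℝ))).comp f'') p :=
    (ContinuousLinearMap.apply ℝ ℂ ((1 : ℝ), (0 : ℝ))).hasFDerivAt.comp p hf''
  have h2 : HasFDerivAt (pdt u)
      ((ContinuousLinearMap.apply ℝ ℂ ((0 : ℝ), (1 : ℝ))).comp f'') p :=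
    (ContinuousLinearMap.apply ℝ ℂ ((0 : ℝ), (1 : ℝ))).hasFDerivAt.comp p hf''
  rw [h1.fderiv]
  show f'' (0, 1) (1, 0) = pdx (pdt u) p
  rw [hsym]
  show f'' (1, 0) (0, 1) = fderiv ℝ (pdt u) p (1, 0)
  rw [h2.fderiv]
  rfl

/-- Proposition 2.2: a solution `u` of the nonlocal Fokas–Lenells equation,
together with a gauge `β` satisfying `∂ₓβ(x,t) = (∂ₓu)(x,t)·(∂ₓu)(−x,−t)`,
`∂ₜβ(x,t) = u(x,t)·u(−x,−t)` and `β(−x,−t) = −β(x,t)`, yields a solution of the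
nonlocal massive Thirring model with `δ = −1`. -/
theorem nonlocalFL_to_nonlocalMTM (u β : ℝ × ℝ → ℂ)
    (hu : ContDiff ℝ (⊤ : ℕ∞) u) (hβ : ContDiff ℝ (⊤ : ℕ∞) β)
    (eFL : ∀ p : ℝ × ℝ, pdx (pdt u) p + u p - 2 * I * u p * u (-p) * pdx u p = 0)
    (hβx : ∀ p : ℝ × ℝ, pdx β p = pdx u p * pdx u (-p))
    (hβt : ∀ p : ℝ × ℝ, pdt β p = u p * u (-p))
    (hβodd : ∀ p : ℝ × ℝ, β (-p) = -β p)
    (q1 q3 : ℝ × ℝ → ℂ)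
    (hq1 : q1 = fun p => pdx u p * exp (-(I * β p)))
    (hq3 : q3 = fun p => I * u p * exp (-(I * β p))) :
    ∀ p : ℝ × ℝ,
      (I * pdt q1 p + q3 p - q1 p * q3 p * q3 (-p) = 0) ∧
      (I * pdx q3 p + q1 p - q3 p * q1 p * q1 (-p) = 0) := by
  subst hq1 hq3
  have hu' : Differentiable ℝ u := hu.differentiable (by simp)
  have hβ' : Differentiable ℝ β := hβ.differentiable (by simp)
  have hDu : ContDiff ℝ (⊤ : ℕ∞) (fderiv ℝ u) := hu.fderiv_right (by simp)
  have hpdxu : ContDiff ℝ (⊤ : ℕ∞) (pdx u) := hDu.clm_apply contDiff_const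
  intro p
  -- derivative of the exponential factor
  have hEβ : HasFDerivAt (fun p => exp (-(I * β p)))
      (exp (-(I * β p)) • (-(I • fderiv ℝ β p))) p :=
    (((hβ' p).hasFDerivAt.const_mul I).neg).cexp
  -- derivative of q1 at p
  have hq1D : HasFDerivAt (fun p => pdx u p * exp (-(I * β p)))
      (pdx u p • (exp (-(I * β p)) • (-(I • fderiv ℝ β p))) +
        exp (-(I * β p)) • fderiv ℝ (pdx u) p) p :=
    (hpdxu.differentiable (by simp) p).hasFDerivAt.mul hEβ
  -- derivative of q3 at p
  have hq3D : HasFDerivAt (fun p => I * u p * exp (-(I * β p)))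
      ((I * u p) • (exp (-(I * β p)) • (-(I • fderiv ℝ β p))) +
        exp (-(I * β p)) • (I • fderiv ℝ u p)) p :=
    ((hu' p).hasFDerivAt.const_mul I).mul hEβ
  have hpdt1 : pdt (fun p => pdx u p * exp (-(I * β p))) p =
      pdx u p * (exp (-(I * β p)) * (-(I * pdt β p))) +
        exp (-(I * β p)) * fderiv ℝ (pdx u) p (0, 1) := by
    show fderiv ℝ _ p (0, 1) = _
    rw [hq1D.fderiv]
    simp [smul_eq_mul, pdt]
  have hpdx3 : pdx (fun p => I * u p * exp (-(I * β p))) p =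
      (I * u p) * (exp (-(I * β p)) * (-(I * pdx β p))) +
        exp (-(I * β p)) * (I * pdx u p) := by
    show fderiv ℝ _ p (1, 0) = _
    rw [hq3D.fderiv]
    simp [smul_eq_mul, pdx]
  have hmix := mixed_symm u hu p
  set E := exp (-(I * β p)) with hE
  have hE' : exp (-(I * β (-p))) = exp (I * β p) := by rw [hβodd]; ring_nf
  have hEE : E * exp (I * β p) = 1 := by
    rw [hE, ← Complex.exp_add]; norm_num
  constructor
  · rw [hpdt1, hmix, hβt]
    beta_reduce
    rw [hE']
    linear_combination (I * E) * eFL p + (u p * u (-p) * pdx u p * E) * hEE + (pdx u p * E * u p * u (-p) - pdx u p * E ^ 2 * u p * u (-p) * cexp (I * β p)) * Complex.I_sq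
  · rw [hpdx3, hβx]
    beta_reduce
    rw [hE']
    linear_combination (-(I * u p * pdx u p * pdx u (-p) * E)) * hEE + (E * pdx u p - I * u p * E * pdx u p * pdx u (-p)) * Complex.I_sq
end

section
/- Let u : ℝ² → ℂ be a smooth function of (x,t) satisfying the nonlocal Fokas–Lenells equation at every point, and define v : ℝ² → ℂ by v(x,t) = u(−x,−t). Then the pair (u, v) satisfies the Mikhailov model at every point. -/
open Complex

lemma comp_neg_fderiv (f : ℝ × ℝ → ℂ) (hf : Differentiable ℝ f) (p : ℝ × ℝ) (w : ℝ × ℝ) :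
    fderiv ℝ (fun q => f (-q)) p w = - fderiv ℝ f (-p) w := by
  have h1 : HasFDerivAt (fun q : ℝ × ℝ => -q) (-(ContinuousLinearMap.id ℝ (ℝ × ℝ))) p :=
    (ContinuousLinearMap.id ℝ (ℝ × ℝ)).hasFDerivAt.neg
  have h2 := ((hf (-p)).hasFDerivAt.comp p h1)
  have h3 : (fun q => f (-q)) = f ∘ (fun q : ℝ × ℝ => -q) := rfl
  rw [h3, h2.fderiv]
  simp

/-- If `u` solves the nonlocal Fokas–Lenells equation, then `(u, v)` with
`v(x,t) = u(−x,−t)` solves the Mikhailov model. -/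
theorem nonlocalFL_to_mikhailov (u : ℝ × ℝ → ℂ)
    (hu : ContDiff ℝ (⊤ : ℕ∞) u)
    (e : ∀ p : ℝ × ℝ, pdx (pdt u) p + u p - 2 * I * u p * u (-p) * pdx u p = 0)
    (v : ℝ × ℝ → ℂ) (hv : v = fun p => u (-p)) :
    ∀ p : ℝ × ℝ,
      (pdx (pdt u) p + u p - 2 * I * u p * v p * pdx u p = 0) ∧
      (pdx (pdt v) p + v p + 2 * I * u p * v p * pdx v p = 0) := by
  have hud : Differentiable ℝ u := hu.differentiable (by simp)
  have hpdtu : ContDiff ℝ (⊤ : ℕ∞) (pdt u) := by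
    exact ContDiff.clm_apply (g := fun _ => ((0:ℝ),(1:ℝ)))
      (hu.fderiv_right (m := (⊤ : ℕ∞)) (by simp)) contDiff_const
  have hpdtud : Differentiable ℝ (pdt u) := hpdtu.differentiable (by simp)
  intro p
  constructor
  · rw [hv]; exact e p
  · -- pdx v p = - pdx u (-p)
    have hvx : ∀ q, pdx v q = - pdx u (-q) := fun q => by
      rw [hv]; exact comp_neg_fderiv u hud q (1, 0)
    have hvt : pdt v = fun q => - pdt u (-q) := by
      funext q; rw [hv]; exact comp_neg_fderiv u hud q (0, 1)
    have hxt : pdx (pdt v) p = pdx (pdt u) (-p) := by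
      rw [hvt]
      unfold pdx
      have h1 : fderiv ℝ (fun q => -(pdt u (-q))) p (1, 0)
          = - fderiv ℝ (fun q => pdt u (-q)) p (1, 0) := by
        have hd : DifferentiableAt ℝ (fun q : ℝ × ℝ => pdt u (-q)) p :=
          (hpdtud (-p)).comp p (differentiable_id.neg.differentiableAt)
        rw [fderiv_fun_neg]
        simp
      rw [h1, comp_neg_fderiv (pdt u) hpdtud p (1, 0)]
      simp [pdx]
    have hvp : v p = u (-p) := by rw [hv]
    rw [hxt, hvp, hvx p]
    have e2 := e (-p)
    simp only [neg_neg] at e2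
    linear_combination e2
end

section
/- Let f, g, h, s, h̃, h̄ : ℝ² → ℂ be smooth functions of (x,t) with f(x,t) ≠ 0 and s(x,t) ≠ 0 for all (x,t), and suppose that at every point the six Hirota bilinear equations hold: (∂ₜh̃)·s − h̃·(∂ₜs) + g·f = 0; (∂ₜh̄)·f − h̄·(∂ₜf) + h·s = 0; (∂ₜf)·s − f·(∂ₜs) + i·g·h = 0; (∂ₓg)·f − g·(∂ₓf) − h̃·s = 0; (∂ₓh)·s − h·(∂ₓs) − h̄·f = 0; (∂ₓf)·s − f·(∂ₓs) − i·h̃·h̄ = 0. Then the functions q1 = h̃/f, q2 = h̄/s, q3 = i·g/s, q4 = −i·h/f satisfy the unreduced massive Thirring system at every point. -/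
open Complex

lemma fderiv_div_apply (a b : ℝ × ℝ → ℂ) (p v : ℝ × ℝ)
    (ha : DifferentiableAt ℝ a p) (hb : DifferentiableAt ℝ b p) (hbp : b p ≠ 0) :
    fderiv ℝ (fun q => a q / b q) p v
      = (fderiv ℝ a p v * b p - a p * fderiv ℝ b p v) / (b p) ^ 2 := by
  have h1 : HasFDerivAt (fun q => (b q)⁻¹)
      ((-ContinuousLinearMap.mulLeftRight ℝ ℂ (b p)⁻¹ (b p)⁻¹).comp (fderiv ℝ b p)) p :=
    (hasFDerivAt_inv' hbp).comp p hb.hasFDerivAt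
  have h2 : HasFDerivAt (fun q => a q * (b q)⁻¹) _ p := ha.hasFDerivAt.mul h1
  have h3 : (fun q => a q / b q) = fun q => a q * (b q)⁻¹ := by
    funext q; rw [div_eq_mul_inv]
  rw [h3, h2.fderiv]
  simp [ContinuousLinearMap.mulLeftRight_apply, smul_eq_mul]
  field_simp
  ring


/-- Solutions of the six Hirota bilinear equations (with nonvanishing `f`, `s`)
give, via `q1 = h̃/f`, `q2 = h̄/s`, `q3 = i·g/s`, `q4 = −i·h/f`, solutions of the
unreduced massive Thirring system. -/
theorem bilinear_to_unreducedMTM (f g h s ht hb : ℝ × ℝ → ℂ)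
    (hfC : ContDiff ℝ (⊤ : ℕ∞) f) (hgC : ContDiff ℝ (⊤ : ℕ∞) g) (hhC : ContDiff ℝ (⊤ : ℕ∞) h)
    (hsC : ContDiff ℝ (⊤ : ℕ∞) s) (htC : ContDiff ℝ (⊤ : ℕ∞) ht) (hbC : ContDiff ℝ (⊤ : ℕ∞) hb)
    (hf0 : ∀ p : ℝ × ℝ, f p ≠ 0) (hs0 : ∀ p : ℝ × ℝ, s p ≠ 0)
    (B1 : ∀ p : ℝ × ℝ, pdt ht p * s p - ht p * pdt s p + g p * f p = 0)
    (B2 : ∀ p : ℝ × ℝ, pdt hb p * f p - hb p * pdt f p + h p * s p = 0)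
    (B3 : ∀ p : ℝ × ℝ, pdt f p * s p - f p * pdt s p + I * g p * h p = 0)
    (B4 : ∀ p : ℝ × ℝ, pdx g p * f p - g p * pdx f p - ht p * s p = 0)
    (B5 : ∀ p : ℝ × ℝ, pdx h p * s p - h p * pdx s p - hb p * f p = 0)
    (B6 : ∀ p : ℝ × ℝ, pdx f p * s p - f p * pdx s p - I * ht p * hb p = 0)
    (q1 q2 q3 q4 : ℝ × ℝ → ℂ)
    (hq1 : q1 = fun p => ht p / f p)
    (hq2 : q2 = fun p => hb p / s p)
    (hq3 : q3 = fun p => I * g p / s p)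
    (hq4 : q4 = fun p => -(I * h p / f p)) :
    ∀ p : ℝ × ℝ,
      (I * pdt q1 p + q3 p + q1 p * q3 p * q4 p = 0) ∧
      (I * pdt q2 p - q4 p - q2 p * q3 p * q4 p = 0) ∧
      (I * pdx q3 p + q1 p + q1 p * q2 p * q3 p = 0) ∧
      (I * pdx q4 p - q2 p - q1 p * q2 p * q4 p = 0) := by
  subst hq1 hq2 hq3 hq4
  intro p
  have df : DifferentiableAt ℝ f p := (hfC.differentiable (by simp)).differentiableAt
  have dg : DifferentiableAt ℝ g p := (hgC.differentiable (by simp)).differentiableAt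
  have dh : DifferentiableAt ℝ h p := (hhC.differentiable (by simp)).differentiableAt
  have ds : DifferentiableAt ℝ s p := (hsC.differentiable (by simp)).differentiableAt
  have dht : DifferentiableAt ℝ ht p := (htC.differentiable (by simp)).differentiableAt
  have dhb : DifferentiableAt ℝ hb p := (hbC.differentiable (by simp)).differentiableAt
  have dIg : DifferentiableAt ℝ (fun q => I * g q) p := dg.const_mul I
  have dIh : DifferentiableAt ℝ (fun q => I * h q) p := dh.const_mul I
  have eIg : ∀ v, fderiv ℝ (fun q => I * g q) p v = I * fderiv ℝ g p v := by
    intro v; rw [fderiv_const_mul dg I]; simp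
  have eIh : ∀ v, fderiv ℝ (fun q => I * h q) p v = I * fderiv ℝ h p v := by
    intro v; rw [fderiv_const_mul dh I]; simp
  have hfp := hf0 p
  have hsp := hs0 p
  have b1 := B1 p; have b2 := B2 p; have b3 := B3 p
  have b4 := B4 p; have b5 := B5 p; have b6 := B6 p
  simp only [pdt, pdx] at b1 b2 b3 b4 b5 b6 ⊢
  have e1 := fderiv_div_apply ht f p (0,1) dht df (hf0 p)
  have e2 := fderiv_div_apply hb s p (0,1) dhb ds (hs0 p)
  have e3 := fderiv_div_apply (fun q => I * g q) s p (1,0) dIg ds (hs0 p)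
  have e4 := fderiv_div_apply (fun q => I * h q) f p (1,0) dIh df (hf0 p)
  have e4' : fderiv ℝ (fun q => -(I * h q / f q)) p (1,0)
      = -(fderiv ℝ (fun q => I * h q / f q) p (1,0)) := by
    rw [fderiv_fun_neg]; simp
  have I2 : I * I = -1 := Complex.I_mul_I
  refine ⟨?_, ?_, ?_, ?_⟩
  · rw [e1]
    field_simp
    linear_combination (I * f p) * b1 - (I * ht p) * b3
  · rw [e2]
    field_simp
    linear_combination (I * s p) * b2 + (I * hb p) * b3
  · rw [e3, eIg]
    field_simp
    linear_combination (-(s p)) * b4 - (g p) * b6 + (fderiv ℝ g p (1,0) * s p * f p - g p * fderiv ℝ s p (1,0) * f p) * I2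
  · rw [e4', e4, eIh]
    field_simp
    linear_combination (f p) * b5 - (h p) * b6 + (h p * fderiv ℝ f p (1,0) * s p - fderiv ℝ h p (1,0) * f p * s p) * I2
end

section
/- (Lemma A.1, Plücker-type determinant identity) Let R be a commutative ring, let n ≥ 2 be an integer, let M be an n×(n−2) matrix over R, and let a, b, c, d ∈ Rⁿ be column vectors. Writing |M, u, v| for the determinant of the n×n matrix whose first n−2 columns are the columns of M and whose last two columns are u and v, one has |M, a, b|·|M, c, d| − |M, a, c|·|M, b, d| + |M, a, d|·|M, b, c| = 0. -/
open Matrix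

/-- The `n×n` matrix obtained by appending two column vectors `u, v` (in this
order) to an `n×(n−2)` matrix `M`. -/
def appendTwoCols {R : Type*} [CommRing R] {n : ℕ}
    (M : Matrix (Fin n) (Fin (n - 2)) R) (u v : Fin n → R) :
    Matrix (Fin n) (Fin n) R :=
  Matrix.of fun i j =>
    if h : (j : ℕ) < n - 2 then M i ⟨j, h⟩
    else if (j : ℕ) = n - 2 then u i else v i

lemma succAbove_val' {m : ℕ} (p : Fin (m+1)) (i : Fin m) :
    ((p.succAbove i : Fin (m+1)) : ℕ) = if (i:ℕ) < (p:ℕ) then (i:ℕ) else (i:ℕ)+1 := by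
  rcases lt_or_ge (Fin.castSucc i) p with h | h
  · rw [Fin.succAbove_of_castSucc_lt _ _ h, if_pos (by simpa [Fin.lt_def] using h)]
    rfl
  · rw [Fin.succAbove_of_le_castSucc _ _ h, if_neg (by simpa [Fin.le_def, not_lt] using h)]
    rfl

theorem plucker_aux {R : Type*} [CommRing R] {k : ℕ}
    (M : Matrix (Fin (k+2)) (Fin (k+2-2)) R) (a b c d : Fin (k+2) → R) :
    (appendTwoCols M a b).det * (appendTwoCols M c d).det
      - (appendTwoCols M a c).det * (appendTwoCols M b d).det
      + (appendTwoCols M a d).det * (appendTwoCols M b c).det = 0 := by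
  -- the n × (n+1) matrix with columns `M, b, c, d`
  set A : Matrix (Fin (k+2)) (Fin (k+3)) R := Matrix.of fun i j =>
    if h : (j:ℕ) < k then M i ⟨j, h⟩
    else if (j:ℕ) = k then b i else if (j:ℕ) = k+1 then c i else d i with hA
  -- entry lemmas for A
  have hAlt : ∀ i (j : Fin (k+3)) (h : (j:ℕ) < k), A i j = M i ⟨j, h⟩ := by
    intro i j h; simp only [hA, Matrix.of_apply]; rw [dif_pos h]
  have hAb : ∀ i (j : Fin (k+3)), (j:ℕ) = k → A i j = b i := by
    intro i j h; simp only [hA, Matrix.of_apply]; rw [dif_neg (by omega), if_pos h]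
  have hAc : ∀ i (j : Fin (k+3)), (j:ℕ) = k+1 → A i j = c i := by
    intro i j h
    simp only [hA, Matrix.of_apply]
    rw [dif_neg (by omega), if_neg (by omega), if_pos h]
  have hAd : ∀ i (j : Fin (k+3)), (j:ℕ) = k+2 → A i j = d i := by
    intro i j h
    simp only [hA, Matrix.of_apply]
    rw [dif_neg (by omega), if_neg (by omega), if_neg (by omega)]
  -- entry lemmas for appendTwoCols
  have hTlt : ∀ (u v : Fin (k+2) → R) i (j : Fin (k+2)) (h : (j:ℕ) < k),
      appendTwoCols M u v i j = M i ⟨j, h⟩ := by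
    intro u v i j h
    simp only [appendTwoCols, Matrix.of_apply]
    rw [dif_pos (show (j:ℕ) < k+2-2 by omega)]
  have hTu : ∀ (u v : Fin (k+2) → R) i (j : Fin (k+2)), (j:ℕ) = k →
      appendTwoCols M u v i j = u i := by
    intro u v i j h
    simp only [appendTwoCols, Matrix.of_apply]
    rw [dif_neg (by omega), if_pos (by omega : (j:ℕ) = k+2-2)]
  have hTv : ∀ (u v : Fin (k+2) → R) i (j : Fin (k+2)), (j:ℕ) = k+1 →
      appendTwoCols M u v i j = v i := by
    intro u v i j h
    simp only [appendTwoCols, Matrix.of_apply]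
    rw [dif_neg (by omega), if_neg (by omega)]
  set D : Fin (k+3) → R := fun j => det (A.submatrix id j.succAbove) with hD
  -- Step 1: Laplace-expansion Cramer identity, one scalar identity per row `r`
  have hrow : ∀ r : Fin (k+2), ∑ j : Fin (k+3), (-1:R)^(j:ℕ) * A r j * D j = 0 := by
    intro r
    set B : Matrix (Fin (k+3)) (Fin (k+3)) R :=
      Matrix.of fun i j => A (Fin.cases r id i) j with hB
    have hB0 : det B = 0 := by
      refine Matrix.det_zero_of_row_eq (i := 0) (j := Fin.succ r) (Fin.succ_ne_zero r).symm ?_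
      funext j
      simp [hB]
    calc ∑ j : Fin (k+3), (-1:R)^(j:ℕ) * A r j * D j
        = ∑ j : Fin (k+2).succ, (-1:R)^(j:ℕ) * B 0 j
            * det (B.submatrix Fin.succ j.succAbove) := by
          refine Finset.sum_congr rfl fun j _ => ?_
          have h1 : B 0 j = A r j := by simp [hB]
          have h2 : B.submatrix Fin.succ j.succAbove = A.submatrix id j.succAbove := by
            ext i j'
            simp [hB]
          rw [h1, h2]
      _ = det B := (Matrix.det_succ_row_zero B).symm
      _ = 0 := hB0
  -- Step 2: the determinant with `M, a` fixed is linear in the last column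
  have key : ∀ x : Fin (k+2) → R, appendTwoCols M a x
      = (appendTwoCols M a (0 : Fin (k+2) → R)).updateCol (Fin.last (k+1)) x := by
    intro x
    ext i j
    rw [Matrix.updateCol_apply]
    by_cases hj : j = Fin.last (k+1)
    · subst hj
      rw [if_pos rfl]
      exact hTv a x i _ (by simp)
    · rw [if_neg hj]
      have h2 := j.isLt
      have h1 : (j:ℕ) ≠ k+1 := fun h => hj (Fin.ext (by simpa using h))
      simp only [appendTwoCols, Matrix.of_apply]
      split_ifs <;> first | rfl | omega
  let L : (Fin (k+2) → R) →ₗ[R] R :=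
    { toFun := fun x => det (appendTwoCols M a x)
      map_add' := by
        intro x y
        rw [key (x+y), key x, key y, Matrix.det_updateCol_add]
      map_smul' := by
        intro s x
        rw [key (s • x), key x, Matrix.det_updateCol_smul]
        rfl }
  have hLdef : ∀ x, L x = det (appendTwoCols M a x) := fun _ => rfl
  -- Step 3: apply L to the Cramer vector identity
  have hzero : ∑ j : Fin (k+3), (-1:R)^(j:ℕ) * D j * L (fun r => A r j) = 0 := by
    have hs : (∑ j : Fin (k+3), ((-1:R)^(j:ℕ) * D j) • (fun r => A r j))
        = (0 : Fin (k+2) → R) := by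
      funext r
      simp only [Finset.sum_apply, Pi.smul_apply, smul_eq_mul, Pi.zero_apply]
      rw [← hrow r]
      exact Finset.sum_congr rfl fun j _ => by ring
    have h := congrArg L hs
    rw [map_sum, map_zero] at h
    rw [← h]
    refine Finset.sum_congr rfl fun j _ => ?_
    rw [L.map_smul, smul_eq_mul]
  -- terms coming from columns of M vanish
  have hcolM : ∀ (j : Fin (k+3)), (j:ℕ) < k → L (fun r => A r j) = 0 := by
    intro j h
    have hcol : (fun r => A r j) = fun r => M r ⟨j, h⟩ := by
      funext r; exact hAlt r j h
    rw [hcol, hLdef]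
    refine Matrix.det_zero_of_column_eq (i := (⟨j, by omega⟩ : Fin (k+2)))
      (j := Fin.last (k+1)) (by simp [Fin.ext_iff]; omega) ?_
    intro i
    rw [hTlt a _ i ⟨j, by omega⟩ h, hTv a _ i (Fin.last (k+1)) (by simp)]
  -- the three distinguished column indices
  obtain ⟨jb, hjb⟩ : ∃ j : Fin (k+3), (j:ℕ) = k := ⟨⟨k, by omega⟩, rfl⟩
  obtain ⟨jc, hjc⟩ : ∃ j : Fin (k+3), (j:ℕ) = k+1 := ⟨⟨k+1, by omega⟩, rfl⟩
  obtain ⟨jd, hjd⟩ : ∃ j : Fin (k+3), (j:ℕ) = k+2 := ⟨⟨k+2, by omega⟩, rfl⟩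
  -- the sum reduces to the three distinguished terms
  have hsplit : ∑ j : Fin (k+3), (-1:R)^(j:ℕ) * D j * L (fun r => A r j)
      = ∑ j ∈ ({jb, jc, jd} : Finset (Fin (k+3))),
          (-1:R)^(j:ℕ) * D j * L (fun r => A r j) := by
    refine (Finset.sum_subset (Finset.subset_univ _) fun j _ hj => ?_).symm
    simp only [Finset.mem_insert, Finset.mem_singleton, not_or] at hj
    obtain ⟨h1, h2, h3⟩ := hj
    have hlt : (j:ℕ) < k := by
      have := j.isLt
      have e1 : (j:ℕ) ≠ k := fun h => h1 (Fin.ext (by omega))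
      have e2 : (j:ℕ) ≠ k+1 := fun h => h2 (Fin.ext (by omega))
      have e3 : (j:ℕ) ≠ k+2 := fun h => h3 (Fin.ext (by omega))
      omega
    rw [hcolM j hlt, mul_zero]
  have hne1 : jb ≠ jc := fun h => by rw [Fin.ext_iff, hjb, hjc] at h; omega
  have hne2 : jb ≠ jd := fun h => by rw [Fin.ext_iff, hjb, hjd] at h; omega
  have hne3 : jc ≠ jd := fun h => by rw [Fin.ext_iff, hjc, hjd] at h; omega
  rw [hsplit, Finset.sum_insert (by simp [hne1, hne2]),
    Finset.sum_insert (by simp [hne3]), Finset.sum_singleton] at hzero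
  -- identify the columns
  have hcb : (fun r => A r jb) = b := funext fun r => hAb r jb hjb
  have hcc : (fun r => A r jc) = c := funext fun r => hAc r jc hjc
  have hcd : (fun r => A r jd) = d := funext fun r => hAd r jd hjd
  -- identify the three minors
  have hDb : D jb = det (appendTwoCols M c d) := by
    have hm : A.submatrix id (jb).succAbove = appendTwoCols M c d := by
      ext i j'
      rw [Matrix.submatrix_apply, id_eq]
      have hv := succAbove_val' jb j'
      rw [hjb] at hv
      by_cases h1 : (j':ℕ) < k
      · rw [if_pos h1] at hv
        rw [hAlt i _ (by omega), hTlt c d i j' h1]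
        exact congrArg (M i) (Fin.ext hv)
      · by_cases h2 : (j':ℕ) = k
        · rw [if_neg h1] at hv
          rw [hAc i _ (by omega), hTu c d i j' h2]
        · have h3 : (j':ℕ) = k+1 := by have := j'.isLt; omega
          rw [if_neg h1] at hv
          rw [hAd i _ (by omega), hTv c d i j' h3]
    rw [hD]
    show det (A.submatrix id _) = _
    rw [hm]
  have hDc : D jc = det (appendTwoCols M b d) := by
    have hm : A.submatrix id (jc).succAbove = appendTwoCols M b d := by
      ext i j'
      rw [Matrix.submatrix_apply, id_eq]
      have hv := succAbove_val' jc j'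
      rw [hjc] at hv
      by_cases h1 : (j':ℕ) < k
      · rw [if_pos (by omega)] at hv
        rw [hAlt i _ (by omega), hTlt b d i j' h1]
        exact congrArg (M i) (Fin.ext hv)
      · by_cases h2 : (j':ℕ) = k
        · rw [if_pos (by omega)] at hv
          rw [hAb i _ (by omega), hTu b d i j' h2]
        · have h3 : (j':ℕ) = k+1 := by have := j'.isLt; omega
          rw [if_neg (by omega)] at hv
          rw [hAd i _ (by omega), hTv b d i j' h3]
    rw [hD]
    show det (A.submatrix id _) = _
    rw [hm]
  have hDd : D jd = det (appendTwoCols M b c) := by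
    have hm : A.submatrix id (jd).succAbove = appendTwoCols M b c := by
      ext i j'
      rw [Matrix.submatrix_apply, id_eq]
      have hv := succAbove_val' jd j'
      rw [hjd] at hv
      by_cases h1 : (j':ℕ) < k
      · rw [if_pos (by omega)] at hv
        rw [hAlt i _ (by omega), hTlt b c i j' h1]
        exact congrArg (M i) (Fin.ext hv)
      · by_cases h2 : (j':ℕ) = k
        · rw [if_pos (by omega)] at hv
          rw [hAb i _ (by omega), hTu b c i j' h2]
        · have h3 : (j':ℕ) = k+1 := by have := j'.isLt; omega
          rw [if_pos (by omega)] at hv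
          rw [hAc i _ (by omega), hTv b c i j' h3]
    rw [hD]
    show det (A.submatrix id _) = _
    rw [hm]
  rw [hcb, hcc, hcd, hDb, hDc, hDd, hjb, hjc, hjd, hLdef, hLdef, hLdef] at hzero
  -- clean up the signs
  have e2 : (-1:R)^(k+1) = (-1:R)^k * (-1) := pow_succ _ _
  have e3 : (-1:R)^(k+2) = (-1:R)^k := by
    rw [show k+2 = (k+1)+1 from rfl, pow_succ, e2]; ring
  rw [e2, e3] at hzero
  rcases Nat.even_or_odd k with hk | hk
  · rw [hk.neg_one_pow] at hzero
    linear_combination hzero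
  · rw [hk.neg_one_pow] at hzero
    linear_combination -hzero

/-- Lemma A.1 (Plücker-type determinant identity):
`|M,a,b|·|M,c,d| − |M,a,c|·|M,b,d| + |M,a,d|·|M,b,c| = 0`. -/
theorem plucker_identity {R : Type*} [CommRing R] {n : ℕ} (hn : 2 ≤ n)
    (M : Matrix (Fin n) (Fin (n - 2)) R) (a b c d : Fin n → R) :
    (appendTwoCols M a b).det * (appendTwoCols M c d).det
      - (appendTwoCols M a c).det * (appendTwoCols M b d).det
      + (appendTwoCols M a d).det * (appendTwoCols M b c).det = 0 := by
  obtain ⟨k, rfl⟩ := Nat.exists_eq_add_of_le' hn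
  exact plucker_aux M a b c d
end

section
/- (Lemma A.2, scalar form) Let R be a commutative ring, n ∈ ℕ, and let Ξ and Γ be n×n matrices over R. For each index j, let Ξ^{col j} denote the matrix obtained from Ξ by replacing its j-th column by the entrywise (Hadamard) product of the j-th column of Γ with the j-th column of Ξ, and let Ξ^{row j} denote the matrix obtained from Ξ by replacing its j-th row by the entrywise product of the j-th row of Γ with the j-th row of Ξ. Then Σ_{j=1}^{n} det(Ξ^{col j}) = Σ_{j=1}^{n} det(Ξ^{row j}). -/
open Matrix

/-- The matrix obtained from `Ξ` by replacing its `j`-th column by the entrywise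
(Hadamard) product of the `j`-th column of `Γ` with the `j`-th column of `Ξ`. -/
def colReplace {R : Type*} [CommRing R] {n : ℕ}
    (Γ Ξ : Matrix (Fin n) (Fin n) R) (j : Fin n) : Matrix (Fin n) (Fin n) R :=
  Matrix.of fun i j' => if j' = j then Γ i j' * Ξ i j' else Ξ i j'

/-- The matrix obtained from `Ξ` by replacing its `j`-th row by the entrywise
(Hadamard) product of the `j`-th row of `Γ` with the `j`-th row of `Ξ`. -/
def rowReplace {R : Type*} [CommRing R] {n : ℕ}
    (Γ Ξ : Matrix (Fin n) (Fin n) R) (j : Fin n) : Matrix (Fin n) (Fin n) R :=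
  Matrix.of fun i j' => if i = j then Γ i j' * Ξ i j' else Ξ i j'

/-- Lemma A.2 (scalar form): the sum over `j` of the determinants of the
column-modified matrices equals the sum over `j` of the determinants of the
row-modified matrices. -/
theorem sum_det_colReplace_eq_sum_det_rowReplace {R : Type*} [CommRing R] {n : ℕ}
    (Γ Ξ : Matrix (Fin n) (Fin n) R) :
    ∑ j : Fin n, (colReplace Γ Ξ j).det = ∑ j : Fin n, (rowReplace Γ Ξ j).det := by
  simp only [Matrix.det_apply', colReplace, rowReplace, Matrix.of_apply]
  rw [Finset.sum_comm]
  conv_rhs => rw [Finset.sum_comm]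
  refine Finset.sum_congr rfl fun σ _ => ?_
  rw [← Equiv.sum_comp σ (fun j => _ * ∏ i, if σ i = j then Γ (σ i) i * Ξ (σ i) i else Ξ (σ i) i)]
  refine Finset.sum_congr rfl fun j _ => ?_
  congr 1
  refine Finset.prod_congr rfl fun i _ => ?_
  simp [Equiv.apply_eq_iff_eq]
end

section
/- (One-soliton solution of the nonlocal massive Thirring model) Let k, h ∈ ℂ with k ≠ 0 and h ≠ 0. Define E_k(x,t) = exp(−i·(k²·x + t/k²)), E_h(x,t) = exp(−i·(h²·x + t/h²)), D1 = k·E_h + h·E_k, D2 = k·E_k + h·E_h, and set q1 = (h² − k²)/D1 and q3 = (h² − k²)/(k·h·D2). Then at every (x,t) ∈ ℝ² such that D1(x,t) ≠ 0 and D2(x,t) ≠ 0, the pair (q1, q3) satisfies the nonlocal massive Thirring model with δ = 1 at (x,t): i·∂ₜq1(x,t) + q3(x,t) + q1(x,t)·q3(x,t)·q3(−x,−t) = 0 and i·∂ₓq3(x,t) + q1(x,t) + q3(x,t)·q1(x,t)·q1(−x,−t) = 0. -/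
open Complex

/-!
Both `Ek` and `Eh` are plane waves `exp (a x + b t)`, so `q1` and `q3` are constant multiples of
the reciprocal of a sum of two plane waves, whose partial derivatives are explicit. Reflecting
`p ↦ -p` inverts each plane wave, so `q1 (-p)` and `q3 (-p)` are again rational in `Ek p` and
`Eh p`. After clearing denominators, the first equation of the model reduces to the identity
`-(k³ Eh + h³ Ek) D2 + k h D1² + (h² - k²)² Ek Eh = 0`, and the second to the same identity
with `Ek` and `Eh` exchanged.
-/

theorem fderiv_const_div_apply {E : Type*} [NormedAddCommGroup E] [NormedSpace ℝ E]
    {f : E → ℂ} {f' : E →L[ℝ] ℂ} {x : E} (hf : HasFDerivAt f f' x) (hx : f x ≠ 0)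
    (c : ℂ) (v : E) :
    fderiv ℝ (fun y => c / f y) x v = -(c * f' v) / f x ^ 2 := by
  have hdiv : HasFDerivAt (fun y => c / f y) (c • -(f x ^ 2)⁻¹ • f') x := by
    simpa only [div_eq_mul_inv, Function.comp_apply] using
      ((hasDerivAt_inv hx).comp_hasFDerivAt x hf).const_mul c
  rw [hdiv.fderiv]
  simp only [smul_apply, smul_eq_mul]
  ring

noncomputable section

def planePhase (a b : ℂ) : ℝ × ℝ →L[ℝ] ℂ :=
  a • ofRealCLM.comp (ContinuousLinearMap.fst ℝ ℝ ℝ) +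
    b • ofRealCLM.comp (ContinuousLinearMap.snd ℝ ℝ ℝ)

@[simp]
theorem planePhase_apply (a b : ℂ) (p : ℝ × ℝ) : planePhase a b p = a * p.1 + b * p.2 := by
  simp [planePhase]

def planeWave (a b : ℂ) (p : ℝ × ℝ) : ℂ := exp (planePhase a b p)

theorem planeWave_neg (a b : ℂ) (p : ℝ × ℝ) : planeWave a b (-p) = (planeWave a b p)⁻¹ := by
  rw [planeWave, planeWave, map_neg, exp_neg]

theorem hasFDerivAt_planeWave (a b : ℂ) (p : ℝ × ℝ) :
    HasFDerivAt (planeWave a b) (planeWave a b p • planePhase a b) p :=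
  (planePhase a b).hasFDerivAt.cexp

section WaveSum

variable (c u v a₁ b₁ a₂ b₂ : ℂ) {p : ℝ × ℝ}

theorem hasFDerivAt_waveSum :
    HasFDerivAt (fun q => u * planeWave a₁ b₁ q + v * planeWave a₂ b₂ q)
      (u • planeWave a₁ b₁ p • planePhase a₁ b₁ + v • planeWave a₂ b₂ p • planePhase a₂ b₂) p :=
  ((hasFDerivAt_planeWave a₁ b₁ p).const_smul u).add
    ((hasFDerivAt_planeWave a₂ b₂ p).const_smul v)

theorem pdx_const_div_waveSum (hp : u * planeWave a₁ b₁ p + v * planeWave a₂ b₂ p ≠ 0) :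
    pdx (fun q => c / (u * planeWave a₁ b₁ q + v * planeWave a₂ b₂ q)) p =
      -(c * (u * a₁ * planeWave a₁ b₁ p + v * a₂ * planeWave a₂ b₂ p)) /
        (u * planeWave a₁ b₁ p + v * planeWave a₂ b₂ p) ^ 2 := by
  rw [pdx, fderiv_const_div_apply (hasFDerivAt_waveSum u v a₁ b₁ a₂ b₂) hp]
  simp only [add_apply, smul_apply, planePhase_apply, smul_eq_mul]
  push_cast
  ring

theorem pdt_const_div_waveSum (hp : u * planeWave a₁ b₁ p + v * planeWave a₂ b₂ p ≠ 0) :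
    pdt (fun q => c / (u * planeWave a₁ b₁ q + v * planeWave a₂ b₂ q)) p =
      -(c * (u * b₁ * planeWave a₁ b₁ p + v * b₂ * planeWave a₂ b₂ p)) /
        (u * planeWave a₁ b₁ p + v * planeWave a₂ b₂ p) ^ 2 := by
  rw [pdt, fderiv_const_div_apply (hasFDerivAt_waveSum u v a₁ b₁ a₂ b₂) hp]
  simp only [add_apply, smul_apply, planePhase_apply, smul_eq_mul]
  push_cast
  ring

end WaveSum

end

/-- One-soliton solution of the nonlocal massive Thirring model with `δ = 1`. -/
theorem oneSoliton_nonlocalMTM (k h : ℂ) (hk : k ≠ 0) (hh : h ≠ 0)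
    (Ek Eh D1 D2 q1 q3 : ℝ × ℝ → ℂ)
    (hEk : Ek = fun p => exp (-I * (k ^ 2 * (p.1 : ℂ) + (p.2 : ℂ) / k ^ 2)))
    (hEh : Eh = fun p => exp (-I * (h ^ 2 * (p.1 : ℂ) + (p.2 : ℂ) / h ^ 2)))
    (hD1 : D1 = fun p => k * Eh p + h * Ek p)
    (hD2 : D2 = fun p => k * Ek p + h * Eh p)
    (hq1 : q1 = fun p => (h ^ 2 - k ^ 2) / D1 p)
    (hq3 : q3 = fun p => (h ^ 2 - k ^ 2) / (k * h * D2 p)) :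
    ∀ p : ℝ × ℝ, D1 p ≠ 0 → D2 p ≠ 0 →
      (I * pdt q1 p + q3 p + q1 p * q3 p * q3 (-p) = 0) ∧
      (I * pdx q3 p + q1 p + q3 p * q1 p * q1 (-p) = 0) := by
  have hEk' : Ek = planeWave (-I * k ^ 2) (-I / k ^ 2) := by
    subst hEk; funext q; simp only [planeWave, planePhase_apply]; congr 1; ring
  have hEh' : Eh = planeWave (-I * h ^ 2) (-I / h ^ 2) := by
    subst hEh; funext q; simp only [planeWave, planePhase_apply]; congr 1; ring
  have hq3' : q3 = fun p => (h ^ 2 - k ^ 2) / (k * h) / D2 p := by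
    simp only [hq3, div_mul_eq_div_div]
  subst hq1 hq3' hD1 hD2 hEk' hEh'
  clear hEk hEh hq3
  intro p hD1 hD2
  beta_reduce at hD1 hD2 ⊢
  rw [pdt_const_div_waveSum _ _ _ _ _ _ _ hD1, pdx_const_div_waveSum _ _ _ _ _ _ _ hD2]
  simp only [planeWave_neg]
  set A := planeWave (-I * k ^ 2) (-I / k ^ 2) p
  set B := planeWave (-I * h ^ 2) (-I / h ^ 2) p
  have hA : A ≠ 0 := exp_ne_zero _
  have hB : B ≠ 0 := exp_ne_zero _
  constructor <;> field_simp <;> ring_nf <;> rw [I_sq] <;> ring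
end

section
/- (Algebraic one-soliton solution of the nonlocal massive Thirring model) Let k ∈ ℝ with k ≠ 0. Define θ(x,t) = k²·x + t/k² and q1(x,t) = −2i·k³·e^{iθ(x,t)}/(2k⁴x − i·k² − 2t), q3(x,t) = −2i·k·e^{iθ(x,t)}/(2k⁴x + i·k² − 2t); the denominators are nonzero for all (x,t) ∈ ℝ². Then: (1) the pair (q1, q3) satisfies the nonlocal massive Thirring model with δ = 1 at every (x,t) ∈ ℝ², i.e. i·∂ₜq1(x,t) + q3(x,t) + q1(x,t)·q3(x,t)·q3(−x,−t) = 0 and i·∂ₓq3(x,t) + q1(x,t) + q3(x,t)·q1(x,t)·q1(−x,−t) = 0; (2) for all (x,t): |q1(x,t)|² = 4k⁶/((2k⁴x − 2t)² + k⁴) and |q3(x,t)|² = 4k²/((2k⁴x − 2t)² + k⁴). -/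
/-!
Both components are of the form `c e^{αx+βt} / (ξ + d)`, with `ξ = 2k⁴x - 2t` real, `α, β`
purely imaginary and `d = ∓ i k²`. Such a function has logarithmic derivative `α - ξₓ / (ξ + d)`
in `x` (similarly in `t`), and the reflection `(x, t) ↦ (-x, -t)` inverts the exponential and
sends `ξ + d` to `-(ξ - d)`, so `q₃(-x,-t)` and `q₁(-x,-t)` are again quotients with denominators
`ξ ∓ i k²`. Each equation then becomes a rational identity in `ξ`, `k` and the exponential, which
holds because `i² = -1`. The modulus of the exponential is `1`, which gives the envelopes.
-/

open Complex

theorem pdx_eq_of_hasDerivAt {f : ℝ × ℝ → ℂ} {p : ℝ × ℝ} {f' : ℂ}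
    (hf : DifferentiableAt ℝ f p) (h : HasDerivAt (fun s => f (s, p.2)) f' p.1) :
    pdx f p = f' :=
  (hf.hasFDerivAt.comp_hasDerivAt p.1 ((hasDerivAt_id _).prodMk (hasDerivAt_const _ _))).unique h

theorem pdt_eq_of_hasDerivAt {f : ℝ × ℝ → ℂ} {p : ℝ × ℝ} {f' : ℂ}
    (hf : DifferentiableAt ℝ f p) (h : HasDerivAt (fun s => f (p.1, s)) f' p.2) :
    pdt f p = f' :=
  (hf.hasFDerivAt.comp_hasDerivAt p.2 ((hasDerivAt_const _ _).prodMk (hasDerivAt_id _))).unique h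

theorem hasDerivAt_const_mul_cexp_div (c : ℂ) {u v : ℝ → ℂ} {u' v' : ℂ} {x : ℝ}
    (hu : HasDerivAt u u' x) (hv : HasDerivAt v v' x) (hvx : v x ≠ 0) :
    HasDerivAt (fun s => c * exp (u s) / v s) (c * exp (u x) / v x * (u' - v' / v x)) x :=
  ((hu.cexp.const_mul c).div hv hvx).congr_deriv (by field_simp)

theorem ofReal_add_ne_zero (r : ℝ) {d : ℂ} (hd : d.im ≠ 0) : (r : ℂ) + d ≠ 0 :=
  fun h => hd (by simpa using congrArg im h)

noncomputable def expAffineQuotient (c α β : ℂ) (a b : ℝ) (d : ℂ) (p : ℝ × ℝ) : ℂ :=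
  c * exp (α * p.1 + β * p.2) / ((a * p.1 + b * p.2 : ℝ) + d)

section
variable {c α β d : ℂ} {a b : ℝ} {p : ℝ × ℝ}

theorem differentiableAt_expAffineQuotient (hd : d.im ≠ 0) :
    DifferentiableAt ℝ (expAffineQuotient c α β a b d) p := by
  unfold expAffineQuotient
  simp only [div_eq_mul_inv]
  fun_prop (disch := exact ofReal_add_ne_zero _ hd)

theorem pdx_expAffineQuotient (hd : d.im ≠ 0) :
    pdx (expAffineQuotient c α β a b d) p = expAffineQuotient c α β a b d p
      * (α - a / (((a * p.1 + b * p.2 : ℝ) : ℂ) + d)) := by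
  refine pdx_eq_of_hasDerivAt (differentiableAt_expAffineQuotient hd) ?_
  have hu : HasDerivAt (fun s : ℝ => α * s + β * p.2) α p.1 := by
    simpa using ((hasDerivAt_id p.1).ofReal_comp.const_mul α).add_const (β * p.2)
  have hv : HasDerivAt (fun s : ℝ => ((a * s + b * p.2 : ℝ) : ℂ) + d) a p.1 := by
    simpa using (((hasDerivAt_id p.1).const_mul a).add_const (b * p.2)).ofReal_comp.add_const d
  exact hasDerivAt_const_mul_cexp_div c hu hv (ofReal_add_ne_zero _ hd)

theorem pdt_expAffineQuotient (hd : d.im ≠ 0) :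
    pdt (expAffineQuotient c α β a b d) p = expAffineQuotient c α β a b d p
      * (β - b / (((a * p.1 + b * p.2 : ℝ) : ℂ) + d)) := by
  refine pdt_eq_of_hasDerivAt (differentiableAt_expAffineQuotient hd) ?_
  have hu : HasDerivAt (fun s : ℝ => α * p.1 + β * s) β p.2 := by
    simpa using ((hasDerivAt_id p.2).ofReal_comp.const_mul β).const_add (α * p.1)
  have hv : HasDerivAt (fun s : ℝ => ((a * p.1 + b * s : ℝ) : ℂ) + d) b p.2 := by
    simpa using (((hasDerivAt_id p.2).const_mul b).const_add (a * p.1)).ofReal_comp.add_const d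
  exact hasDerivAt_const_mul_cexp_div c hu hv (ofReal_add_ne_zero _ hd)

theorem expAffineQuotient_neg :
    expAffineQuotient c α β a b d (-p)
      = -c / (exp (α * p.1 + β * p.2) * (((a * p.1 + b * p.2 : ℝ) : ℂ) - d)) := by
  have hneg : (a * -p.1 + b * -p.2 : ℝ) = -(a * p.1 + b * p.2) := by ring
  rw [expAffineQuotient, Prod.fst_neg, Prod.snd_neg, hneg, ofReal_neg, ofReal_neg, ofReal_neg,
    mul_neg, mul_neg, ← neg_add, exp_neg, neg_add_eq_sub, ← neg_sub (↑(a * p.1 + b * p.2) : ℂ) d]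
  simp only [div_eq_mul_inv, mul_inv, inv_neg]
  ring

end

theorem sq_norm_expAffineQuotient {c α β d : ℂ} {a b : ℝ} (p : ℝ × ℝ) (hα : α.re = 0)
    (hβ : β.re = 0) :
    ‖expAffineQuotient c α β a b d p‖ ^ 2
      = ‖c‖ ^ 2 / ((a * p.1 + b * p.2 + d.re) ^ 2 + d.im ^ 2) := by
  rw [expAffineQuotient, norm_div, norm_mul, norm_exp, div_pow, mul_pow, Complex.sq_norm (_ + d),
    normSq_apply]
  simp [hα, hβ]
  ring

noncomputable def oneSolitonQ1 (k : ℝ) : ℝ × ℝ → ℂ :=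
  expAffineQuotient (-2 * I * k ^ 3) (I * k ^ 2) (I / k ^ 2) (2 * k ^ 4) (-2) (-(I * k ^ 2))

noncomputable def oneSolitonQ3 (k : ℝ) : ℝ × ℝ → ℂ :=
  expAffineQuotient (-2 * I * k) (I * k ^ 2) (I / k ^ 2) (2 * k ^ 4) (-2) (I * k ^ 2)

section
variable {k : ℝ} (hk : k ≠ 0) (p : ℝ × ℝ)
include hk

theorem im_I_mul_sq_ne_zero : (I * (k : ℂ) ^ 2).im ≠ 0 := by
  simpa [← ofReal_pow] using pow_ne_zero 2 hk

theorem im_neg_I_mul_sq_ne_zero : (-(I * (k : ℂ) ^ 2)).im ≠ 0 := by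
  rw [neg_im, neg_ne_zero]
  exact im_I_mul_sq_ne_zero hk

theorem ofReal_sub_I_mul_sq_ne_zero (r : ℝ) : (r : ℂ) - I * k ^ 2 ≠ 0 := by
  simpa only [sub_eq_add_neg] using ofReal_add_ne_zero r (im_neg_I_mul_sq_ne_zero hk)

theorem ofReal_add_I_mul_sq_ne_zero (r : ℝ) : (r : ℂ) + I * k ^ 2 ≠ 0 :=
  ofReal_add_ne_zero r (im_I_mul_sq_ne_zero hk)

theorem oneSoliton_first_equation :
    I * pdt (oneSolitonQ1 k) p + oneSolitonQ3 k p
      + oneSolitonQ1 k p * oneSolitonQ3 k p * oneSolitonQ3 k (-p) = 0 := by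
  have hm := ofReal_sub_I_mul_sq_ne_zero hk (2 * k ^ 4 * p.1 + -2 * p.2)
  have hp := ofReal_add_I_mul_sq_ne_zero hk (2 * k ^ 4 * p.1 + -2 * p.2)
  have hE := exp_ne_zero (I * k ^ 2 * p.1 + I / k ^ 2 * p.2)
  have hk' : (k : ℂ) ≠ 0 := ofReal_ne_zero.2 hk
  rw [oneSolitonQ1, pdt_expAffineQuotient (im_neg_I_mul_sq_ne_zero hk), oneSolitonQ3,
    expAffineQuotient_neg]
  simp only [expAffineQuotient]
  generalize ((2 * k ^ 4 * p.1 + -2 * p.2 : ℝ) : ℂ) = ξ at *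
  generalize exp (I * k ^ 2 * p.1 + I / k ^ 2 * p.2) = E at *
  push_cast
  simp only [← sub_eq_add_neg]
  field_simp
  linear_combination (2 * I * k * E * (I ^ 2 * k ^ 4 - ξ ^ 2)) * I_sq

theorem oneSoliton_second_equation :
    I * pdx (oneSolitonQ3 k) p + oneSolitonQ1 k p
      + oneSolitonQ3 k p * oneSolitonQ1 k p * oneSolitonQ1 k (-p) = 0 := by
  have hm := ofReal_sub_I_mul_sq_ne_zero hk (2 * k ^ 4 * p.1 + -2 * p.2)
  have hp := ofReal_add_I_mul_sq_ne_zero hk (2 * k ^ 4 * p.1 + -2 * p.2)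
  have hE := exp_ne_zero (I * k ^ 2 * p.1 + I / k ^ 2 * p.2)
  have hk' : (k : ℂ) ≠ 0 := ofReal_ne_zero.2 hk
  rw [oneSolitonQ3, pdx_expAffineQuotient (im_I_mul_sq_ne_zero hk), oneSolitonQ1,
    expAffineQuotient_neg]
  simp only [expAffineQuotient]
  generalize ((2 * k ^ 4 * p.1 + -2 * p.2 : ℝ) : ℂ) = ξ at *
  generalize exp (I * k ^ 2 * p.1 + I / k ^ 2 * p.2) = E at *
  push_cast
  simp only [← sub_eq_add_neg, sub_neg_eq_add]
  field_simp
  linear_combination (2 * I * k ^ 3 * E * (I ^ 2 * k ^ 4 - ξ ^ 2)) * I_sq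

end

theorem sq_norm_oneSolitonQ1 (k : ℝ) (p : ℝ × ℝ) :
    ‖oneSolitonQ1 k p‖ ^ 2 = 4 * k ^ 6 / ((2 * k ^ 4 * p.1 - 2 * p.2) ^ 2 + k ^ 4) := by
  rw [oneSolitonQ1,
    sq_norm_expAffineQuotient p (by simp [← ofReal_pow]) (by simp [← ofReal_pow])]
  simp [← ofReal_pow]
  rw [mul_pow, ← abs_pow, sq_abs]
  ring

theorem sq_norm_oneSolitonQ3 (k : ℝ) (p : ℝ × ℝ) :
    ‖oneSolitonQ3 k p‖ ^ 2 = 4 * k ^ 2 / ((2 * k ^ 4 * p.1 - 2 * p.2) ^ 2 + k ^ 4) := by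
  rw [oneSolitonQ3,
    sq_norm_expAffineQuotient p (by simp [← ofReal_pow]) (by simp [← ofReal_pow])]
  simp [← ofReal_pow]
  rw [mul_pow, sq_abs]
  ring

/-- Algebraic one-soliton solution of the nonlocal massive Thirring model with
`δ = 1`: the denominators never vanish, the equations hold everywhere, and the
squared envelopes are the stated rational functions. -/
theorem algebraicOneSoliton_nonlocalMTM (k : ℝ) (hk : k ≠ 0)
    (θ : ℝ × ℝ → ℂ) (q1 q3 : ℝ × ℝ → ℂ)
    (hθ : θ = fun p => (k : ℂ) ^ 2 * (p.1 : ℂ) + (p.2 : ℂ) / (k : ℂ) ^ 2)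
    (hq1 : q1 = fun p =>
      -2 * I * (k : ℂ) ^ 3 * exp (I * θ p)
        / (2 * (k : ℂ) ^ 4 * (p.1 : ℂ) - I * (k : ℂ) ^ 2 - 2 * (p.2 : ℂ)))
    (hq3 : q3 = fun p =>
      -2 * I * (k : ℂ) * exp (I * θ p)
        / (2 * (k : ℂ) ^ 4 * (p.1 : ℂ) + I * (k : ℂ) ^ 2 - 2 * (p.2 : ℂ))) :
    (∀ p : ℝ × ℝ,
      (2 * (k : ℂ) ^ 4 * (p.1 : ℂ) - I * (k : ℂ) ^ 2 - 2 * (p.2 : ℂ)) ≠ 0 ∧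
      (2 * (k : ℂ) ^ 4 * (p.1 : ℂ) + I * (k : ℂ) ^ 2 - 2 * (p.2 : ℂ)) ≠ 0) ∧
    (∀ p : ℝ × ℝ,
      (I * pdt q1 p + q3 p + q1 p * q3 p * q3 (-p) = 0) ∧
      (I * pdx q3 p + q1 p + q3 p * q1 p * q1 (-p) = 0)) ∧
    (∀ p : ℝ × ℝ,
      ‖q1 p‖ ^ 2
        = 4 * k ^ 6 / ((2 * k ^ 4 * p.1 - 2 * p.2) ^ 2 + k ^ 4) ∧
      ‖q3 p‖ ^ 2
        = 4 * k ^ 2 / ((2 * k ^ 4 * p.1 - 2 * p.2) ^ 2 + k ^ 4)) := by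
  subst hθ
  obtain rfl : q1 = oneSolitonQ1 k := by
    funext p
    rw [hq1, oneSolitonQ1, expAffineQuotient]
    push_cast
    ring_nf
  obtain rfl : q3 = oneSolitonQ3 k := by
    funext p
    rw [hq3, oneSolitonQ3, expAffineQuotient]
    push_cast
    ring_nf
  refine ⟨fun p => ⟨?_, ?_⟩,
    fun p => ⟨oneSoliton_first_equation hk p, oneSoliton_second_equation hk p⟩,
    fun p => ⟨sq_norm_oneSolitonQ1 k p, sq_norm_oneSolitonQ3 k p⟩⟩
  · convert ofReal_sub_I_mul_sq_ne_zero hk (2 * k ^ 4 * p.1 - 2 * p.2) using 1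
    push_cast
    ring
  · convert ofReal_add_I_mul_sq_ne_zero hk (2 * k ^ 4 * p.1 - 2 * p.2) using 1
    push_cast
    ring
end
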